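/- arXiv:1206.5061 — 9 statements merged into one kernel-verified Lean document; each statement's English description precedes it below -/
import Mathlib

section
/- The deformed bracket {·,·}_g satisfies the Jacobi identity: for all smooth functions f, h, k : ℝ^{2n} → ℝ, {f,{h,k}_g}_g + {h,{k,f}_g}_g + {k,{f,h}_g}_g = 0 identically on ℝ^{2n}. -/
open scoped BigOperators

noncomputable section

abbrev Pt (n : ℕ) : Type := (Fin n → ℝ) × (Fin n → ℝ)

/-- partial derivative in the coordinate `q i` -/
def dq {n : ℕ} (f : Pt n → ℝ) (i : Fin n) (z : Pt n) : ℝ :=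
  fderiv ℝ f z (Pi.single i 1, 0)

/-- partial derivative in the coordinate `p i` -/
def dp {n : ℕ} (f : Pt n → ℝ) (i : Fin n) (z : Pt n) : ℝ :=
  fderiv ℝ f z (0, Pi.single i 1)

/-- partial derivative of a function of `q` only -/
def dqg {n : ℕ} (g : (Fin n → ℝ) → ℝ) (i : Fin n) (q : Fin n → ℝ) : ℝ :=
  fderiv ℝ g q (Pi.single i 1)

/-- `F i j = (∂g/∂q_j) p_i - (∂g/∂q_i) p_j` -/
def Fmat {n : ℕ} (g : (Fin n → ℝ) → ℝ) (i j : Fin n) (z : Pt n) : ℝ :=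
  dqg g j z.1 * z.2 i - dqg g i z.1 * z.2 j

/-- the deformed bracket {f,h}_g -/
def gBracket {n : ℕ} (g : (Fin n → ℝ) → ℝ) (f h : Pt n → ℝ) (z : Pt n) : ℝ :=
  (∑ i, g z.1 * (dq f i z * dp h i z - dp f i z * dq h i z))
    + ∑ i, ∑ j, dp f i z * Fmat g i j z * dp h j z

/-! ### Auxiliary development -/

section Aux

/-- unified index type -/
abbrev Idx (n : ℕ) := Fin n ⊕ Fin n

/-- coordinate directions -/
def ee {n : ℕ} (a : Idx n) : Pt n :=
  Sum.elim (fun i => ((Pi.single i 1 : Fin n → ℝ), 0)) (fun i => (0, (Pi.single i 1 : Fin n → ℝ))) a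

/-- unified directional derivative -/
def Dd {n : ℕ} (f : Pt n → ℝ) (a : Idx n) (z : Pt n) : ℝ := fderiv ℝ f z (ee a)

lemma Dd_inl {n : ℕ} (f : Pt n → ℝ) (i : Fin n) : Dd f (Sum.inl i) = dq f i := rfl
lemma Dd_inr {n : ℕ} (f : Pt n → ℝ) (i : Fin n) : Dd f (Sum.inr i) = dp f i := rfl

/-- the structure matrix of the deformed bracket -/
def piM {n : ℕ} (g : (Fin n → ℝ) → ℝ) (a b : Idx n) (z : Pt n) : ℝ :=
  match a, b with
  | Sum.inl _, Sum.inl _ => 0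
  | Sum.inl i, Sum.inr j => if i = j then g z.1 else 0
  | Sum.inr i, Sum.inl j => if i = j then -(g z.1) else 0
  | Sum.inr i, Sum.inr j => Fmat g i j z

lemma piM_skew {n : ℕ} (g : (Fin n → ℝ) → ℝ) (a b : Idx n) (z : Pt n) :
    piM g b a z = -piM g a b z := by
  rcases a with i | i <;> rcases b with j | j <;>
    simp only [piM, Fmat, eq_comm, neg_zero, neg_neg] <;>
    first
      | (split <;> simp)
      | ring

/-- the bracket in unified index form -/
lemma gBracket_eq {n : ℕ} (g : (Fin n → ℝ) → ℝ) (f h : Pt n → ℝ) (z : Pt n) :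
    gBracket g f h z = ∑ a : Idx n, ∑ b : Idx n, Dd f a z * piM g a b z * Dd h b z := by
  rw [gBracket]
  rw [Fintype.sum_sum_type]
  simp only [Fintype.sum_sum_type, Dd_inl, Dd_inr, piM]
  simp only [mul_ite, mul_zero, ite_mul, zero_mul, Finset.sum_ite_eq, Finset.mem_univ, if_true,
    Finset.sum_add_distrib, Finset.sum_sub_distrib, mul_neg, Finset.sum_neg_distrib]
  ring_nf
  simp only [Finset.sum_const_zero, add_zero, zero_add]
  rw [Finset.sum_sub_distrib]
  rw [show ∀ A B C : ℝ, A - B + C = C + A + -B from by intros; ring]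
  congr 1
  · congr 1
    · rw [← Finset.sum_neg_distrib]

variable {n : ℕ}

lemma contDiff_Dd {f : Pt n → ℝ} (hf : ContDiff ℝ (⊤ : ℕ∞) f) (a : Idx n) :
    ContDiff ℝ (⊤ : ℕ∞) (fun z => Dd f a z) :=
  (hf.fderiv_right (by simp)).clm_apply contDiff_const

lemma contDiff_dqg {g : (Fin n → ℝ) → ℝ} (hg : ContDiff ℝ (⊤ : ℕ∞) g) (i : Fin n) :
    ContDiff ℝ (⊤ : ℕ∞) (fun q => dqg g i q) :=
  (hg.fderiv_right (by simp)).clm_apply contDiff_const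

lemma contDiff_p (i : Fin n) : ContDiff ℝ (⊤ : ℕ∞) (fun z : Pt n => z.2 i) :=
  ((ContinuousLinearMap.proj i).comp (ContinuousLinearMap.snd ℝ (Fin n → ℝ) (Fin n → ℝ))).contDiff

-- basic directional-derivative calculus
lemma Dd_mul {f h : Pt n → ℝ} (a : Idx n) (z : Pt n)
    (hf : DifferentiableAt ℝ f z) (hh : DifferentiableAt ℝ h z) :
    Dd (fun z => f z * h z) a z = Dd f a z * h z + f z * Dd h a z := by
  unfold Dd; rw [fderiv_fun_mul hf hh]
  simp [smul_eq_mul]; ring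

lemma Dd_sub {f h : Pt n → ℝ} (a : Idx n) (z : Pt n)
    (hf : DifferentiableAt ℝ f z) (hh : DifferentiableAt ℝ h z) :
    Dd (fun z => f z - h z) a z = Dd f a z - Dd h a z := by
  unfold Dd; rw [fderiv_fun_sub hf hh]; rfl

lemma Dd_sum {α : Type*} (s : Finset α) (f : α → Pt n → ℝ) (a : Idx n) (z : Pt n)
    (hf : ∀ i ∈ s, DifferentiableAt ℝ (f i) z) :
    Dd (fun z => ∑ i ∈ s, f i z) a z = ∑ i ∈ s, Dd (f i) a z := by
  unfold Dd; rw [fderiv_fun_sum hf]; simp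

lemma Dd_const' (c : ℝ) (a : Idx n) (z : Pt n) : Dd (fun _ => c) a z = 0 := by
  unfold Dd; simp

lemma Dd_comp_fst {g : (Fin n → ℝ) → ℝ} (hg : Differentiable ℝ g) (a : Idx n) (z : Pt n) :
    Dd (fun z : Pt n => g z.1) a z = Sum.elim (fun i => dqg g i z.1) (fun _ => (0:ℝ)) a := by
  have h1 : fderiv ℝ (fun z : Pt n => g z.1) z
      = (fderiv ℝ g z.1).comp (ContinuousLinearMap.fst ℝ (Fin n → ℝ) (Fin n → ℝ)) :=
    ((hg z.1).hasFDerivAt.comp z hasFDerivAt_fst).fderiv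
  unfold Dd
  rw [h1]
  rcases a with i | i <;> simp [ee, dqg]

lemma Dd_p (i : Fin n) (a : Idx n) (z : Pt n) :
    Dd (fun z : Pt n => z.2 i) a z
      = Sum.elim (fun _ => (0:ℝ)) (fun j => if i = j then (1:ℝ) else 0) a := by
  have h1 : (fun z : Pt n => z.2 i)
      = fun z : Pt n => ((ContinuousLinearMap.proj i).comp
          (ContinuousLinearMap.snd ℝ (Fin n → ℝ) (Fin n → ℝ))) z := rfl
  unfold Dd
  rw [h1, ContinuousLinearMap.fderiv]
  rcases a with j | j <;> simp [ee, Pi.single_apply, eq_comm]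

/-- symmetry of second derivatives (Clairaut) -/
lemma Dd_Dd_symm {f : Pt n → ℝ} (hf : ContDiff ℝ (⊤ : ℕ∞) f) (a b : Idx n) (z : Pt n) :
    Dd (fun z => Dd f a z) b z = Dd (fun z => Dd f b z) a z := by
  have hd : DifferentiableAt ℝ (fderiv ℝ f) z :=
    ((hf.fderiv_right (m := (⊤ : ℕ∞)) (by simp)).differentiable (by simp)).differentiableAt
  have key : ∀ v w : Pt n, fderiv ℝ (fun z => fderiv ℝ f z v) z w
      = fderiv ℝ (fderiv ℝ f) z w v := by
    intro v w
    rw [show (fun z => fderiv ℝ f z v) = fun z => (fderiv ℝ f z) ((fun _ => v) z) from rfl]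
    rw [fderiv_clm_apply hd (differentiableAt_const _)]
    simp only [ContinuousLinearMap.add_apply, ContinuousLinearMap.coe_comp', Function.comp_apply,
      ContinuousLinearMap.flip_apply, fderiv_const_apply, Pi.zero_apply,
      ContinuousLinearMap.zero_apply, map_zero, zero_add]
  unfold Dd
  rw [key, key]
  exact (hf.contDiffAt.isSymmSndFDerivAt (by rw [minSmoothness_of_isRCLikeNormedField]; exact WithTop.coe_le_coe.mpr le_top)) _ _

/-- second partial of `g` -/
def ddg (g : (Fin n → ℝ) → ℝ) (i j : Fin n) (q : Fin n → ℝ) : ℝ := dqg (dqg g j) i q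

lemma ddg_symm {g : (Fin n → ℝ) → ℝ} (hg : ContDiff ℝ (⊤ : ℕ∞) g) (i j : Fin n) (q : Fin n → ℝ) :
    ddg g i j q = ddg g j i q := by
  have hd : DifferentiableAt ℝ (fderiv ℝ g) q :=
    ((hg.fderiv_right (m := (⊤ : ℕ∞)) (by simp)).differentiable (by simp)).differentiableAt
  have key : ∀ v w : Fin n → ℝ, fderiv ℝ (fun q => fderiv ℝ g q v) q w
      = fderiv ℝ (fderiv ℝ g) q w v := by
    intro v w
    rw [show (fun q => fderiv ℝ g q v) = fun q => (fderiv ℝ g q) ((fun _ => v) q) from rfl]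
    rw [fderiv_clm_apply hd (differentiableAt_const _)]
    simp only [ContinuousLinearMap.add_apply, ContinuousLinearMap.coe_comp', Function.comp_apply,
      ContinuousLinearMap.flip_apply, fderiv_const_apply, Pi.zero_apply,
      ContinuousLinearMap.zero_apply, map_zero, zero_add]
  unfold ddg dqg
  rw [key, key]
  exact (hg.contDiffAt.isSymmSndFDerivAt (by rw [minSmoothness_of_isRCLikeNormedField]; exact WithTop.coe_le_coe.mpr le_top)) _ _

section piMderiv
variable {g : (Fin n → ℝ) → ℝ} (hg : ContDiff ℝ (⊤ : ℕ∞) g)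
include hg

lemma diff_dqg_fst (j : Fin n) : Differentiable ℝ (fun z : Pt n => dqg g j z.1) :=
  (((contDiff_dqg hg j).comp contDiff_fst).differentiable (by simp))

omit hg in lemma diff_p (i : Fin n) : Differentiable ℝ (fun z : Pt n => z.2 i) :=
  (ContinuousLinearMap.differentiable
    ((ContinuousLinearMap.proj i).comp (ContinuousLinearMap.snd ℝ (Fin n → ℝ) (Fin n → ℝ))))

lemma Dd_Fmat (i j : Fin n) (c : Idx n) (z : Pt n) :
    Dd (Fmat g i j) c z
      = Sum.elim
          (fun k => ddg g k j z.1 * z.2 i - ddg g k i z.1 * z.2 j)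
          (fun k => dqg g j z.1 * (if i = k then (1:ℝ) else 0)
                    - dqg g i z.1 * (if j = k then (1:ℝ) else 0)) c := by
  have h1 : Fmat g i j = fun z : Pt n =>
      (fun z : Pt n => dqg g j z.1 * z.2 i) z - (fun z : Pt n => dqg g i z.1 * z.2 j) z := rfl
  rw [h1, Dd_sub (f := fun z => dqg g j z.1 * z.2 i) (h := fun z => dqg g i z.1 * z.2 j) c z (((diff_dqg_fst hg j).mul (diff_p i)) z) (((diff_dqg_fst hg i).mul (diff_p j)) z),
    Dd_mul c z ((diff_dqg_fst hg j) z) ((diff_p i) z),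
    Dd_mul c z ((diff_dqg_fst hg i) z) ((diff_p j) z),
    Dd_comp_fst ((contDiff_dqg hg j).differentiable (by simp)) c z,
    Dd_comp_fst ((contDiff_dqg hg i).differentiable (by simp)) c z,
    Dd_p i c z, Dd_p j c z]
  rcases c with k | k <;> simp [ddg] <;> ring

omit hg in lemma Dd_piM_ll (i j : Fin n) (c : Idx n) (z : Pt n) :
    Dd (piM g (Sum.inl i) (Sum.inl j)) c z = 0 := Dd_const' 0 c z

lemma Dd_piM_lr (i j : Fin n) (c : Idx n) (z : Pt n) :
    Dd (piM g (Sum.inl i) (Sum.inr j)) c z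
      = if i = j then Sum.elim (fun k => dqg g k z.1) (fun _ => (0:ℝ)) c else 0 := by
  by_cases hij : i = j
  · have : piM g (Sum.inl i) (Sum.inr j) = fun z : Pt n => g z.1 := by
      funext z; simp [piM, hij]
    rw [this, if_pos hij, Dd_comp_fst (hg.differentiable (by simp))]
  · have : piM g (Sum.inl i) (Sum.inr j) = fun _ : Pt n => (0:ℝ) := by
      funext z; simp [piM, hij]
    rw [this, if_neg hij, Dd_const']

lemma Dd_piM_rl (i j : Fin n) (c : Idx n) (z : Pt n) :
    Dd (piM g (Sum.inr i) (Sum.inl j)) c z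
      = if i = j then Sum.elim (fun k => -dqg g k z.1) (fun _ => (0:ℝ)) c else 0 := by
  by_cases hij : i = j
  · have h1 : piM g (Sum.inr i) (Sum.inl j) = fun z : Pt n => (-1) * g z.1 := by
      funext z; simp [piM, hij]
    rw [h1, if_pos hij]
    have hGz : DifferentiableAt ℝ (fun z : Pt n => g z.1) z := by
      exact ((hg.differentiable (by simp)).comp differentiable_fst).differentiableAt
    rw [Dd_mul c z (differentiableAt_const _) hGz,
      Dd_const', Dd_comp_fst (hg.differentiable (by simp))]
    rcases c with k | k <;> simp
  · have : piM g (Sum.inr i) (Sum.inl j) = fun _ : Pt n => (0:ℝ) := by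
      funext z; simp [piM, hij]
    rw [this, if_neg hij, Dd_const']

omit hg in lemma Dd_piM_rr (i j : Fin n) (c : Idx n) (z : Pt n) :
    Dd (piM g (Sum.inr i) (Sum.inr j)) c z = Dd (Fmat g i j) c z := rfl

end piMderiv

/-- the trivector sum -/
def triv (g : (Fin n → ℝ) → ℝ) (a c d : Idx n) (z : Pt n) : ℝ :=
  ∑ b : Idx n, (piM g a b z * Dd (piM g c d) b z + piM g c b z * Dd (piM g d a) b z
      + piM g d b z * Dd (piM g a c) b z)

lemma triv_cyc (g : (Fin n → ℝ) → ℝ) (a c d : Idx n) (z : Pt n) :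
    triv g a c d z = triv g c d a z :=
  Finset.sum_congr rfl (fun b _ => by ring)

section trivzero
variable {g : (Fin n → ℝ) → ℝ} (hg : ContDiff ℝ (⊤ : ℕ∞) g)
include hg

lemma triv_qqq (i j k : Fin n) (z : Pt n) :
    triv g (Sum.inl i) (Sum.inl j) (Sum.inl k) z = 0 := by
  unfold triv
  rw [Fintype.sum_sum_type]
  simp only [piM, Dd_piM_ll, Dd_piM_lr hg, Dd_piM_rl hg, Sum.elim_inl, Sum.elim_inr]
  simp

lemma triv_qqp (i j k : Fin n) (z : Pt n) :
    triv g (Sum.inl i) (Sum.inl j) (Sum.inr k) z = 0 := by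
  unfold triv
  rw [Fintype.sum_sum_type]
  simp only [piM, Dd_piM_ll, Dd_piM_lr hg, Dd_piM_rl hg, Sum.elim_inl, Sum.elim_inr]
  simp

lemma triv_qpp (i j k : Fin n) (z : Pt n) :
    triv g (Sum.inl i) (Sum.inr j) (Sum.inr k) z = 0 := by
  unfold triv
  rw [Fintype.sum_sum_type]
  simp only [piM, Dd_piM_ll, Dd_piM_lr hg, Dd_piM_rl hg, Dd_piM_rr, Dd_Fmat hg (g:=g),
    Sum.elim_inl, Sum.elim_inr]
  simp only [zero_mul, mul_zero, ite_self, add_zero, zero_add, ite_mul, neg_mul, mul_ite, mul_neg,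
    neg_neg, mul_one, Finset.sum_ite_eq, Finset.mem_univ, if_true, Finset.sum_add_distrib,
    Finset.sum_sub_distrib, Finset.sum_neg_distrib]
  split_ifs <;> (subst_vars; simp [Finset.sum_ite_eq]) <;>
    first | (exact absurd rfl (by assumption)) | ring

lemma triv_ppp (i j k : Fin n) (z : Pt n) :
    triv g (Sum.inr i) (Sum.inr j) (Sum.inr k) z = 0 := by
  unfold triv
  rw [Fintype.sum_sum_type]
  simp only [piM, Dd_piM_ll, Dd_piM_lr hg, Dd_piM_rl hg, Dd_piM_rr, Dd_Fmat hg (g:=g),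
    Sum.elim_inl, Sum.elim_inr]
  simp only [zero_mul, mul_zero, ite_self, add_zero, zero_add, ite_mul, neg_mul, mul_ite, mul_neg,
    neg_neg, mul_one, Finset.sum_ite_eq, Finset.mem_univ, if_true, Finset.sum_add_distrib,
    Finset.sum_sub_distrib, Finset.sum_neg_distrib]
  simp only [mul_sub, mul_ite, mul_zero, Finset.sum_sub_distrib, Finset.sum_ite_eq,
    Finset.mem_univ, if_true, Fmat]
  linear_combination (-(g z.1) * z.2 j) * (ddg_symm hg i k z.1)
    + (g z.1 * z.2 k) * (ddg_symm hg i j z.1) + (g z.1 * z.2 i) * (ddg_symm hg j k z.1)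

end trivzero

lemma triv_zero {g : (Fin n → ℝ) → ℝ} (hg : ContDiff ℝ (⊤ : ℕ∞) g) (a c d : Idx n) (z : Pt n) :
    triv g a c d z = 0 := by
  rcases a with i | i <;> rcases c with j | j <;> rcases d with k | k
  · exact triv_qqq hg i j k z
  · exact triv_qqp hg i j k z
  · rw [triv_cyc, triv_cyc]; exact triv_qqp hg k i j z
  · exact triv_qpp hg i j k z
  · rw [triv_cyc]; exact triv_qqp hg j k i z
  · rw [triv_cyc]; exact triv_qpp hg j k i z
  · rw [triv_cyc, triv_cyc]; exact triv_qpp hg k i j z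
  · exact triv_ppp hg i j k z

lemma contDiff_piM {g : (Fin n → ℝ) → ℝ} (hg : ContDiff ℝ (⊤ : ℕ∞) g) (a b : Idx n) :
    ContDiff ℝ (⊤ : ℕ∞) (fun z => piM g a b z) := by
  rcases a with i | i <;> rcases b with j | j
  · exact contDiff_const
  · rcases eq_or_ne i j with rfl | hij
    · have : (fun z => piM g (Sum.inl i) (Sum.inr i) z) = fun z : Pt n => g z.1 := by
        funext z; simp [piM]
      rw [this]; exact hg.comp contDiff_fst
    · have : (fun z => piM g (Sum.inl i) (Sum.inr j) z) = fun _ : Pt n => (0:ℝ) := by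
        funext z; simp [piM, hij]
      rw [this]; exact contDiff_const
  · rcases eq_or_ne i j with rfl | hij
    · have : (fun z => piM g (Sum.inr i) (Sum.inl i) z) = fun z : Pt n => -(g z.1) := by
        funext z; simp [piM]
      rw [this]; exact (hg.comp contDiff_fst).neg
    · have : (fun z => piM g (Sum.inr i) (Sum.inl j) z) = fun _ : Pt n => (0:ℝ) := by
        funext z; simp [piM, hij]
      rw [this]; exact contDiff_const
  · show ContDiff ℝ (⊤ : ℕ∞) (fun z => Fmat g i j z)
    exact (((contDiff_dqg hg j).comp contDiff_fst).mul (contDiff_p i)).sub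
      (((contDiff_dqg hg i).comp contDiff_fst).mul (contDiff_p j))

/-- iterated directional derivative -/
def Dd2 {n : ℕ} (f : Pt n → ℝ) (a b : Idx n) (z : Pt n) : ℝ := Dd (fun z => Dd f a z) b z

/-- derivative of the bracket -/
lemma Dd_gBracket {g : (Fin n → ℝ) → ℝ} {f h : Pt n → ℝ}
    (hg : ContDiff ℝ (⊤ : ℕ∞) g) (hf : ContDiff ℝ (⊤ : ℕ∞) f) (hh : ContDiff ℝ (⊤ : ℕ∞) h)
    (c : Idx n) (z : Pt n) :
    Dd (gBracket g f h) c z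
      = ∑ a : Idx n, ∑ b : Idx n,
          (Dd2 f a c z * piM g a b z * Dd h b z
            + Dd f a z * Dd (piM g a b) c z * Dd h b z
            + Dd f a z * piM g a b z * Dd2 h b c z) := by
  have hT : ∀ a b : Idx n, ContDiff ℝ (⊤ : ℕ∞) (fun z => Dd f a z * piM g a b z * Dd h b z) :=
    fun a b => ((contDiff_Dd hf a).mul (contDiff_piM hg a b)).mul (contDiff_Dd hh b)
  have hB : gBracket g f h
      = fun z => ∑ a : Idx n, ∑ b : Idx n, Dd f a z * piM g a b z * Dd h b z :=
    funext (gBracket_eq g f h)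
  rw [hB]
  rw [Dd_sum Finset.univ (fun a z => ∑ b : Idx n, Dd f a z * piM g a b z * Dd h b z) c z
    (fun a _ => ((ContDiff.sum (fun b _ => hT a b)).differentiable (by simp)).differentiableAt)]
  refine Finset.sum_congr rfl fun a _ => ?_
  rw [Dd_sum Finset.univ (fun b z => Dd f a z * piM g a b z * Dd h b z) c z
    (fun b _ => ((hT a b).differentiable (by simp)).differentiableAt)]
  refine Finset.sum_congr rfl fun b _ => ?_
  have d1 : DifferentiableAt ℝ (fun z => Dd f a z) z :=
    ((contDiff_Dd hf a).differentiable (by simp)).differentiableAt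
  have d2 : DifferentiableAt ℝ (fun z => piM g a b z) z :=
    ((contDiff_piM hg a b).differentiable (by simp)).differentiableAt
  have d3 : DifferentiableAt ℝ (fun z => Dd h b z) z :=
    ((contDiff_Dd hh b).differentiable (by simp)).differentiableAt
  rw [Dd_mul (f := fun z => Dd f a z * piM g a b z) c z (d1.mul d2) d3, Dd_mul c z d1 d2]
  unfold Dd2
  ring

/-! ### abstract finite-sum algebra -/

variable {ι : Type*} [Fintype ι]

lemma sum4_prod (G : ι → ι → ι → ι → ℝ) :
    (∑ a, ∑ b, ∑ c, ∑ d, G a b c d) = ∑ x : ι × ι × ι × ι, G x.1 x.2.1 x.2.2.1 x.2.2.2 := by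
  simp [Fintype.sum_prod_type]

lemma sum4_reindex (σ : (ι × ι × ι × ι) ≃ (ι × ι × ι × ι)) (L G : ι → ι → ι → ι → ℝ)
    (hσ : ∀ x : ι × ι × ι × ι, L x.1 x.2.1 x.2.2.1 x.2.2.2
        = G (σ x).1 (σ x).2.1 (σ x).2.2.1 (σ x).2.2.2) :
    (∑ a, ∑ b, ∑ c, ∑ d, L a b c d) = ∑ a, ∑ b, ∑ c, ∑ d, G a b c d := by
  rw [sum4_prod, sum4_prod]
  rw [Finset.sum_congr rfl (fun x _ => hσ x)]
  exact Equiv.sum_comp σ (fun x => G x.1 x.2.1 x.2.2.1 x.2.2.2)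

lemma sum4_congr {G G' : ι → ι → ι → ι → ℝ} (h : ∀ a b c d, G a b c d = G' a b c d) :
    (∑ a, ∑ b, ∑ c, ∑ d, G a b c d) = ∑ a, ∑ b, ∑ c, ∑ d, G' a b c d := by
  exact Finset.sum_congr rfl fun a _ => Finset.sum_congr rfl fun b _ =>
    Finset.sum_congr rfl fun c _ => Finset.sum_congr rfl fun d _ => h a b c d

lemma sum4_add (G1 G2 : ι → ι → ι → ι → ℝ) :
    ((∑ a, ∑ b, ∑ c, ∑ d, G1 a b c d) + ∑ a, ∑ b, ∑ c, ∑ d, G2 a b c d)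
      = ∑ a, ∑ b, ∑ c, ∑ d, (G1 a b c d + G2 a b c d) := by
  simp [Finset.sum_add_distrib]

lemma sum_rot3 (E : ι → ι → ι → ℝ) :
    (∑ b, ∑ c, ∑ d, E b c d) = ∑ c, ∑ d, ∑ b, E b c d := by
  rw [Finset.sum_comm]
  exact Finset.sum_congr rfl (fun c _ => Finset.sum_comm)

lemma pair_cancel (H K : ι → ℝ) (P : ι → ι → ℝ) (hP : ∀ a b, P b a = -P a b)
    (X2 : ι → ι → ℝ) (hX2 : ∀ a b, X2 a b = X2 b a) :
    ((∑ a, ∑ b, ∑ c, ∑ d, H a * P a b * K c * P c d * X2 d b)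
      + ∑ a, ∑ b, ∑ c, ∑ d, K a * P a b * X2 c b * P c d * H d) = 0 := by
  have h2 : (∑ a, ∑ b, ∑ c, ∑ d, K a * P a b * X2 c b * P c d * H d)
      = ∑ a, ∑ b, ∑ c, ∑ d, -(H a * P a b * K c * P c d * X2 d b) := by
    apply sum4_reindex
      (⟨fun x => (x.2.2.2, x.2.2.1, x.1, x.2.1), fun x => (x.2.2.1, x.2.2.2, x.2.1, x.1),
        fun _ => rfl, fun _ => rfl⟩ : (ι × ι × ι × ι) ≃ (ι × ι × ι × ι))
    rintro ⟨a, b, c, d⟩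
    show K a * P a b * X2 c b * P c d * H d = -(H d * P d c * K a * P a b * X2 b c)
    rw [hP c d, hX2 b c]
    ring
  rw [h2, sum4_add]
  simp

lemma triple_term (F H K : ι → ℝ) (P : ι → ι → ℝ) (DP : ι → ι → ι → ℝ)
    (htriv : ∀ a c d, (∑ b, (P a b * DP c d b + P c b * DP d a b + P d b * DP a c b)) = 0) :
    ((∑ a, ∑ b, ∑ c, ∑ d, F a * P a b * H c * DP c d b * K d)
      + (∑ a, ∑ b, ∑ c, ∑ d, H a * P a b * K c * DP c d b * F d)
      + (∑ a, ∑ b, ∑ c, ∑ d, K a * P a b * F c * DP c d b * H d)) = 0 := by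
  have h5 : (∑ a, ∑ b, ∑ c, ∑ d, H a * P a b * K c * DP c d b * F d)
      = ∑ a, ∑ b, ∑ c, ∑ d, F a * H c * K d * (P c b * DP d a b) := by
    apply sum4_reindex
      (⟨fun x => (x.2.2.2, x.2.1, x.1, x.2.2.1), fun x => (x.2.2.1, x.2.1, x.2.2.2, x.1),
        fun _ => rfl, fun _ => rfl⟩ : (ι × ι × ι × ι) ≃ (ι × ι × ι × ι))
    rintro ⟨a, b, c, d⟩
    show H a * P a b * K c * DP c d b * F d = F d * H a * K c * (P a b * DP c d b)
    ring
  have h8 : (∑ a, ∑ b, ∑ c, ∑ d, K a * P a b * F c * DP c d b * H d)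
      = ∑ a, ∑ b, ∑ c, ∑ d, F a * H c * K d * (P d b * DP a c b) := by
    apply sum4_reindex
      (⟨fun x => (x.2.2.1, x.2.1, x.2.2.2, x.1), fun x => (x.2.2.2, x.2.1, x.1, x.2.2.1),
        fun _ => rfl, fun _ => rfl⟩ : (ι × ι × ι × ι) ≃ (ι × ι × ι × ι))
    rintro ⟨a, b, c, d⟩
    show K a * P a b * F c * DP c d b * H d = F c * H d * K a * (P a b * DP c d b)
    ring
  have h2 : (∑ a, ∑ b, ∑ c, ∑ d, F a * P a b * H c * DP c d b * K d)
      = ∑ a, ∑ b, ∑ c, ∑ d, F a * H c * K d * (P a b * DP c d b) :=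
    sum4_congr (fun a b c d => by ring)
  rw [h2, h5, h8, sum4_add, sum4_add]
  rw [sum4_congr (fun a b c d => by
    rw [← mul_add, ← mul_add] :
      ∀ a b c d, (F a * H c * K d * (P a b * DP c d b) + F a * H c * K d * (P c b * DP d a b)
        + F a * H c * K d * (P d b * DP a c b))
      = F a * H c * K d * (P a b * DP c d b + P c b * DP d a b + P d b * DP a c b))]
  rw [Finset.sum_congr rfl (fun a _ => sum_rot3 _)]
  apply Finset.sum_eq_zero; intro a _
  apply Finset.sum_eq_zero; intro c _
  apply Finset.sum_eq_zero; intro d _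
  rw [← Finset.mul_sum, htriv, mul_zero]

lemma abstract_jacobi (F H K : ι → ℝ) (F2 H2 K2 : ι → ι → ℝ) (P : ι → ι → ℝ)
    (DP : ι → ι → ι → ℝ)
    (hP : ∀ a b, P b a = -P a b)
    (hF2 : ∀ a b, F2 a b = F2 b a) (hH2 : ∀ a b, H2 a b = H2 b a)
    (hK2 : ∀ a b, K2 a b = K2 b a)
    (htriv : ∀ a c d, (∑ b, (P a b * DP c d b + P c b * DP d a b + P d b * DP a c b)) = 0) :
    ((∑ a, ∑ b, ∑ c, ∑ d, F a * P a b
        * (H2 c b * P c d * K d + H c * DP c d b * K d + H c * P c d * K2 d b))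
      + (∑ a, ∑ b, ∑ c, ∑ d, H a * P a b
        * (K2 c b * P c d * F d + K c * DP c d b * F d + K c * P c d * F2 d b))
      + (∑ a, ∑ b, ∑ c, ∑ d, K a * P a b
        * (F2 c b * P c d * H d + F c * DP c d b * H d + F c * P c d * H2 d b))) = 0 := by
  have h1 : (∑ a, ∑ b, ∑ c, ∑ d, F a * P a b
        * (H2 c b * P c d * K d + H c * DP c d b * K d + H c * P c d * K2 d b))
      = ((∑ a, ∑ b, ∑ c, ∑ d, F a * P a b * H2 c b * P c d * K d)
        + (∑ a, ∑ b, ∑ c, ∑ d, F a * P a b * H c * DP c d b * K d))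
        + (∑ a, ∑ b, ∑ c, ∑ d, F a * P a b * H c * P c d * K2 d b) := by
    rw [sum4_add, sum4_add]
    exact sum4_congr (fun a b c d => by ring)
  have h2 : (∑ a, ∑ b, ∑ c, ∑ d, H a * P a b
        * (K2 c b * P c d * F d + K c * DP c d b * F d + K c * P c d * F2 d b))
      = ((∑ a, ∑ b, ∑ c, ∑ d, H a * P a b * K2 c b * P c d * F d)
        + (∑ a, ∑ b, ∑ c, ∑ d, H a * P a b * K c * DP c d b * F d))
        + (∑ a, ∑ b, ∑ c, ∑ d, H a * P a b * K c * P c d * F2 d b) := by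
    rw [sum4_add, sum4_add]
    exact sum4_congr (fun a b c d => by ring)
  have h3 : (∑ a, ∑ b, ∑ c, ∑ d, K a * P a b
        * (F2 c b * P c d * H d + F c * DP c d b * H d + F c * P c d * H2 d b))
      = ((∑ a, ∑ b, ∑ c, ∑ d, K a * P a b * F2 c b * P c d * H d)
        + (∑ a, ∑ b, ∑ c, ∑ d, K a * P a b * F c * DP c d b * H d))
        + (∑ a, ∑ b, ∑ c, ∑ d, K a * P a b * F c * P c d * H2 d b) := by
    rw [sum4_add, sum4_add]
    exact sum4_congr (fun a b c d => by ring)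
  have pa := pair_cancel K F P hP H2 hH2
  have pb := pair_cancel F H P hP K2 hK2
  have pc := pair_cancel H K P hP F2 hF2
  have tt := triple_term F H K P DP htriv
  rw [h1, h2, h3]
  linarith

end Aux

/-- the deformed bracket {·,·}_g satisfies the Jacobi identity. -/
theorem jacobi_gBracket {n : ℕ} (hn : 1 ≤ n) (g : (Fin n → ℝ) → ℝ)
    (hg : ContDiff ℝ (⊤ : ℕ∞) g) (hg0 : ∀ q, g q ≠ 0)
    (f h k : Pt n → ℝ)
    (hf : ContDiff ℝ (⊤ : ℕ∞) f) (hh : ContDiff ℝ (⊤ : ℕ∞) h) (hk : ContDiff ℝ (⊤ : ℕ∞) k) :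
    ∀ z : Pt n,
      gBracket g f (gBracket g h k) z + gBracket g h (gBracket g k f) z
        + gBracket g k (gBracket g f h) z = 0 := by
  intro z
  have expand : ∀ (u v w : Pt n → ℝ), ContDiff ℝ (⊤ : ℕ∞) u → ContDiff ℝ (⊤ : ℕ∞) v → ContDiff ℝ (⊤ : ℕ∞) w →
      gBracket g u (gBracket g v w) z
        = ∑ a : Idx n, ∑ b : Idx n, ∑ c : Idx n, ∑ d : Idx n,
            Dd u a z * piM g a b z
              * (Dd2 v c b z * piM g c d z * Dd w d z
                + Dd v c z * Dd (piM g c d) b z * Dd w d z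
                + Dd v c z * piM g c d z * Dd2 w d b z) := by
    intro u v w hu hv hw
    rw [gBracket_eq]
    refine Finset.sum_congr rfl fun a _ => Finset.sum_congr rfl fun b _ => ?_
    rw [Dd_gBracket hg hv hw b z, Finset.mul_sum]
    exact Finset.sum_congr rfl fun c _ => Finset.mul_sum _ _ _
  rw [expand f h k hf hh hk, expand h k f hh hk hf, expand k f h hk hf hh]
  exact abstract_jacobi (fun a => Dd f a z) (fun a => Dd h a z) (fun a => Dd k a z)
    (fun a b => Dd2 f a b z) (fun a b => Dd2 h a b z) (fun a b => Dd2 k a b z)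
    (fun a b => piM g a b z) (fun c d b => Dd (piM g c d) b z)
    (fun a b => piM_skew g a b z)
    (fun a b => Dd_Dd_symm hf a b z) (fun a b => Dd_Dd_symm hh a b z)
    (fun a b => Dd_Dd_symm hk a b z)
    (fun a c d => triv_zero hg a c d z)
end
end

section
/- For every smooth Hamiltonian H : ℝ^{2n} → ℝ, the time-reparametrized (conformally Hamiltonian) vector field Ẑ with components Ẑ_{q_k} = ∂H/∂p_k and Ẑ_{p_k} = −∂H/∂q_k + g(q)^{−1} Σ_{j=1}^n F_{kj} ∂H/∂p_j (i.e. Ẑ = g^{−1} X, where X is the deformed Hamiltonian vector field of H) has the invariant volume form g^{1−n} dq dp: Σ_{k=1}^n [ ∂/∂q_k ( g(q)^{1−n} Ẑ_{q_k} ) + ∂/∂p_k ( g(q)^{1−n} Ẑ_{p_k} ) ] = 0 identically on ℝ^{2n}. -/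
open scoped BigOperators

noncomputable section

namespace InvAux

variable {E : Type*} [NormedAddCommGroup E] [NormedSpace ℝ E] {n : ℕ}

lemma Dadd {f h : E → ℝ} {z : E} (hf : DifferentiableAt ℝ f z)
    (hh : DifferentiableAt ℝ h z) (v : E) :
    fderiv ℝ (fun w => f w + h w) z v = fderiv ℝ f z v + fderiv ℝ h z v := by
  rw [fderiv_fun_add hf hh]; rfl

lemma Dneg {f : E → ℝ} {z : E} (v : E) :
    fderiv ℝ (fun w => -(f w)) z v = -(fderiv ℝ f z v) := by
  rw [fderiv_fun_neg]; rfl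

lemma Dmul {f h : E → ℝ} {z : E} (hf : DifferentiableAt ℝ f z)
    (hh : DifferentiableAt ℝ h z) (v : E) :
    fderiv ℝ (fun w => f w * h w) z v
      = fderiv ℝ f z v * h z + f z * fderiv ℝ h z v := by
  rw [fderiv_fun_mul hf hh]
  simp [smul_eq_mul]; ring

lemma Dsub {f h : E → ℝ} {z : E} (hf : DifferentiableAt ℝ f z)
    (hh : DifferentiableAt ℝ h z) (v : E) :
    fderiv ℝ (fun w => f w - h w) z v = fderiv ℝ f z v - fderiv ℝ h z v := by
  rw [fderiv_fun_sub hf hh]; rfl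

lemma Dsum {ι : Type*} (s : Finset ι) {f : ι → E → ℝ} {z : E}
    (hf : ∀ i ∈ s, DifferentiableAt ℝ (f i) z) (v : E) :
    fderiv ℝ (fun w => ∑ i ∈ s, f i w) z v = ∑ i ∈ s, fderiv ℝ (f i) z v := by
  rw [fderiv_fun_sum hf]
  simp

lemma Dcomp_fst (φ : (Fin n → ℝ) → ℝ) (z : Pt n) (hφ : DifferentiableAt ℝ φ z.1)
    (v : Pt n) : fderiv ℝ (fun w : Pt n => φ w.1) z v = fderiv ℝ φ z.1 v.1 := by
  have h : (fun w : Pt n => φ w.1) = φ ∘ Prod.fst := rfl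
  rw [h, fderiv_comp z hφ differentiableAt_fst]
  simp [fderiv_fst]

lemma Dcomp_fst_p (φ : (Fin n → ℝ) → ℝ) (z : Pt n) (hφ : DifferentiableAt ℝ φ z.1)
    (v : Fin n → ℝ) : fderiv ℝ (fun w : Pt n => φ w.1) z (0, v) = 0 := by
  rw [Dcomp_fst φ z hφ]
  simp

lemma Dsnd_apply (j : Fin n) (z : Pt n) (v : Pt n) :
    fderiv ℝ (fun w : Pt n => w.2 j) z v = v.2 j := by
  have h : (fun w : Pt n => w.2 j)
      = ⇑((ContinuousLinearMap.proj j).comp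
          (ContinuousLinearMap.snd ℝ (Fin n → ℝ) (Fin n → ℝ))) := rfl
  rw [h, ContinuousLinearMap.fderiv]
  rfl

lemma diff_snd_apply (j : Fin n) : Differentiable ℝ (fun w : Pt n => w.2 j) :=
  ((ContinuousLinearMap.proj j).comp
      (ContinuousLinearMap.snd ℝ (Fin n → ℝ) (Fin n → ℝ))).differentiable

lemma clairaut {f : E → ℝ} (hf : ContDiff ℝ (⊤ : ℕ∞) f) (z v w : E) :
    fderiv ℝ (fun y => fderiv ℝ f y v) z w = fderiv ℝ (fun y => fderiv ℝ f y w) z v := by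
  have hsym : IsSymmSndFDerivAt ℝ f z :=
    hf.contDiffAt.isSymmSndFDerivAt (by rw [minSmoothness_of_isRCLikeNormedField]; exact WithTop.coe_le_coe.mpr le_top)
  have hd : DifferentiableAt ℝ (fderiv ℝ f) z :=
    ((hf.fderiv_right (m := 1) (WithTop.coe_le_coe.mpr le_top)).differentiable one_ne_zero) z
  rw [fderiv_clm_apply hd (differentiableAt_const v),
    fderiv_clm_apply hd (differentiableAt_const w)]
  simpa using hsym w v

lemma diff_fderiv_apply {f : E → ℝ} (hf : ContDiff ℝ (⊤ : ℕ∞) f) (v : E) :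
    Differentiable ℝ (fun y => fderiv ℝ f y v) :=
  ((hf.fderiv_right (m := 1) (WithTop.coe_le_coe.mpr le_top)).clm_apply contDiff_const).differentiable one_ne_zero

end InvAux

/-- the conformally Hamiltonian vector field
`Ẑ_{q_k} = ∂H/∂p_k`, `Ẑ_{p_k} = -∂H/∂q_k + g⁻¹ ∑_j F_{kj} ∂H/∂p_j`
has the invariant volume form `g^{1-n} dq dp`. -/
theorem invariant_measure_gBracket {n : ℕ} (hn : 1 ≤ n) (g : (Fin n → ℝ) → ℝ)
    (hg : ContDiff ℝ (⊤ : ℕ∞) g) (hg0 : ∀ q, g q ≠ 0)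
    (H : Pt n → ℝ) (hH : ContDiff ℝ (⊤ : ℕ∞) H) :
    ∀ z : Pt n,
      (∑ k, dq (fun w => g w.1 ^ (1 - (n : ℤ)) * dp H k w) k z)
        + (∑ k, dp (fun w =>
            g w.1 ^ (1 - (n : ℤ)) *
              (-(dq H k w) + (g w.1)⁻¹ * ∑ j, Fmat g k j w * dp H j w)) k z) = 0 := by
  intro z
  set m : ℤ := 1 - (n : ℤ) with hm
  -- basic differentiability facts
  have hgD : Differentiable ℝ g := hg.differentiable (by simp)
  have hA : ∀ j : Fin n, Differentiable ℝ (fun w : Pt n => dp H j w) := fun j =>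
    InvAux.diff_fderiv_apply hH ((0 : Fin n → ℝ), Pi.single j 1)
  have hB : ∀ k : Fin n, Differentiable ℝ (fun w : Pt n => dq H k w) := fun k =>
    InvAux.diff_fderiv_apply hH (Pi.single k 1, (0 : Fin n → ℝ))
  have hGq : ∀ j : Fin n, Differentiable ℝ (dqg g j) := fun j =>
    InvAux.diff_fderiv_apply hg (Pi.single j 1)
  have hGqw : ∀ j : Fin n, Differentiable ℝ (fun w : Pt n => dqg g j w.1) := fun j =>
    (hGq j).comp differentiable_fst
  have hzpow : ∀ q : Fin n → ℝ, HasFDerivAt (fun q => g q ^ m)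
      (((m : ℝ) * g q ^ (m - 1)) • fderiv ℝ g q) q := fun q =>
    (hasDerivAt_zpow m (g q) (Or.inl (hg0 q))).comp_hasFDerivAt q (hgD q).hasFDerivAt
  have hzq : Differentiable ℝ (fun q : Fin n → ℝ => g q ^ m) := fun q =>
    (hzpow q).differentiableAt
  have hρ : Differentiable ℝ (fun w : Pt n => g w.1 ^ m) := hzq.comp differentiable_fst
  have hρq : ∀ k : Fin n, fderiv ℝ (fun w : Pt n => g w.1 ^ m) z (Pi.single k 1, 0)
      = ((m : ℝ) * g z.1 ^ (m - 1)) * dqg g k z.1 := by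
    intro k
    rw [InvAux.Dcomp_fst (fun q => g q ^ m) z (hzpow z.1).differentiableAt,
      (hzpow z.1).fderiv]
    simp [dqg, smul_eq_mul]
  have hinv : Differentiable ℝ (fun w : Pt n => (g w.1)⁻¹) :=
    (hgD.comp differentiable_fst).inv fun w => hg0 w.1
  have hFdiff : ∀ k j : Fin n, Differentiable ℝ (Fmat g k j) := fun k j =>
    ((hGqw j).mul (InvAux.diff_snd_apply k)).sub ((hGqw k).mul (InvAux.diff_snd_apply j))
  have hFp : ∀ k j : Fin n, fderiv ℝ (Fmat g k j) z (0, Pi.single k 1)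
      = dqg g j z.1 - dqg g k z.1 * (Pi.single k 1 : Fin n → ℝ) j := by
    intro k j
    have h : Fmat g k j = fun w : Pt n => dqg g j w.1 * w.2 k - dqg g k w.1 * w.2 j := rfl
    rw [h, InvAux.Dsub (((hGqw j).fun_mul (InvAux.diff_snd_apply k)) z)
        (((hGqw k).fun_mul (InvAux.diff_snd_apply j)) z),
      InvAux.Dmul ((hGqw j) z) ((InvAux.diff_snd_apply k) z),
      InvAux.Dmul ((hGqw k) z) ((InvAux.diff_snd_apply j) z),
      InvAux.Dcomp_fst_p (dqg g j) z ((hGq j) z.1),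
      InvAux.Dcomp_fst_p (dqg g k) z ((hGq k) z.1),
      InvAux.Dsnd_apply, InvAux.Dsnd_apply]
    simp
  have hS : ∀ k : Fin n, Differentiable ℝ
      (fun w : Pt n => ∑ j, Fmat g k j w * dp H j w) := by
    intro k x
    exact DifferentiableAt.fun_sum fun j _ => ((hFdiff k j) x).mul ((hA j) x)
  -- symmetry of second derivatives
  have hCsym : ∀ k j : Fin n, dp (dp H j) k z = dp (dp H k) j z := fun k j =>
    InvAux.clairaut hH z ((0 : Fin n → ℝ), Pi.single j 1) ((0 : Fin n → ℝ), Pi.single k 1)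
  have hmix : ∀ k : Fin n, dq (dp H k) k z = dp (dq H k) k z := fun k =>
    InvAux.clairaut hH z ((0 : Fin n → ℝ), Pi.single k 1) (Pi.single k 1, (0 : Fin n → ℝ))
  -- the vanishing double sum
  have hT : (∑ k, ∑ j, Fmat g k j z * dp (dp H j) k z) = 0 := by
    have h1 : (∑ k, ∑ j, Fmat g k j z * dp (dp H j) k z)
        = ∑ k, ∑ j, Fmat g j k z * dp (dp H k) j z := Finset.sum_comm
    have h2 : ∀ k j : Fin n, Fmat g j k z * dp (dp H k) j z
        = -(Fmat g k j z * dp (dp H j) k z) := by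
      intro k j
      rw [← hCsym k j]
      have : Fmat g j k z = -(Fmat g k j z) := by simp [Fmat]
      rw [this]; ring
    have h3 : (∑ k, ∑ j, Fmat g k j z * dp (dp H j) k z)
        = -(∑ k, ∑ j, Fmat g k j z * dp (dp H j) k z) := by
      nth_rewrite 1 [h1]
      rw [Finset.sum_congr rfl fun k _ => Finset.sum_congr rfl fun j _ => h2 k j]
      simp
    linarith
  -- expansion of the first sum
  have e1 : ∀ k : Fin n, dq (fun w => g w.1 ^ m * dp H k w) k z
      = ((m : ℝ) * g z.1 ^ (m - 1)) * dqg g k z.1 * dp H k z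
        + g z.1 ^ m * dp (dq H k) k z := by
    intro k
    show fderiv ℝ (fun w : Pt n => g w.1 ^ m * dp H k w) z (Pi.single k 1, 0) = _
    rw [InvAux.Dmul (hρ z) ((hA k) z), hρq k, ← hmix k]
    rfl
  -- expansion of the second sum
  have hSp : ∀ k : Fin n,
      fderiv ℝ (fun w : Pt n => ∑ j, Fmat g k j w * dp H j w) z (0, Pi.single k 1)
      = ((∑ j, dqg g j z.1 * dp H j z) - dqg g k z.1 * dp H k z
          + ∑ j, Fmat g k j z * dp (dp H j) k z) := by
    intro k
    rw [InvAux.Dsum Finset.univ (fun j _ => ((hFdiff k j) z).fun_mul ((hA j) z))]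
    have hterm : ∀ j : Fin n, fderiv ℝ (fun w : Pt n => Fmat g k j w * dp H j w) z
        (0, Pi.single k 1)
        = (dqg g j z.1 - dqg g k z.1 * (Pi.single k 1 : Fin n → ℝ) j) * dp H j z
          + Fmat g k j z * dp (dp H j) k z := by
      intro j
      rw [InvAux.Dmul ((hFdiff k j) z) ((hA j) z), hFp k j]
      rfl
    rw [Finset.sum_congr rfl fun j _ => hterm j, Finset.sum_add_distrib]
    congr 1
    simp_rw [sub_mul]
    rw [Finset.sum_sub_distrib]
    congr 1
    rw [Finset.sum_eq_single k]
    · simp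
    · intro b _ hb
      simp [Pi.single_apply, hb]
    · intro hk
      exact absurd (Finset.mem_univ k) hk
  have e2 : ∀ k : Fin n, dp (fun w =>
        g w.1 ^ m * (-(dq H k w) + (g w.1)⁻¹ * ∑ j, Fmat g k j w * dp H j w)) k z
      = g z.1 ^ m * (-(dp (dq H k) k z) + (g z.1)⁻¹ *
          ((∑ j, dqg g j z.1 * dp H j z) - dqg g k z.1 * dp H k z
            + ∑ j, Fmat g k j z * dp (dp H j) k z)) := by
    intro k
    show fderiv ℝ (fun w : Pt n =>
        g w.1 ^ m * (-(dq H k w) + (g w.1)⁻¹ * ∑ j, Fmat g k j w * dp H j w)) z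
        (0, Pi.single k 1) = _
    have hψ : DifferentiableAt ℝ
        (fun w : Pt n => -(dq H k w) + (g w.1)⁻¹ * ∑ j, Fmat g k j w * dp H j w) z :=
      (((hB k) z).neg).add ((hinv z).mul ((hS k) z))
    rw [InvAux.Dmul (hρ z) hψ,
      InvAux.Dcomp_fst_p (fun q => g q ^ m) z (hzpow z.1).differentiableAt,
      zero_mul, zero_add]
    congr 1
    rw [InvAux.Dadd (((hB k) z).fun_neg) ((hinv z).fun_mul ((hS k) z)),
      InvAux.Dneg,
      InvAux.Dmul (hinv z) ((hS k) z),
      InvAux.Dcomp_fst_p (fun q => (g q)⁻¹) z (((hgD z.1).inv (hg0 z.1))),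
      zero_mul, zero_add, hSp k]
    rfl
  -- put things together
  rw [Finset.sum_congr rfl fun k _ => e1 k, Finset.sum_congr rfl fun k _ => e2 k,
    ← Finset.sum_add_distrib]
  have hgm : g z.1 ^ m = g z.1 ^ (m - 1) * g z.1 := by
    rw [← zpow_add_one₀ (hg0 z.1), sub_add_cancel]
  have step : ∀ k ∈ (Finset.univ : Finset (Fin n)),
      (((m : ℝ) * g z.1 ^ (m - 1)) * dqg g k z.1 * dp H k z
          + g z.1 ^ m * dp (dq H k) k z)
        + g z.1 ^ m * (-(dp (dq H k) k z) + (g z.1)⁻¹ *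
            ((∑ j, dqg g j z.1 * dp H j z) - dqg g k z.1 * dp H k z
              + ∑ j, Fmat g k j z * dp (dp H j) k z))
      = ((m : ℝ) * g z.1 ^ (m - 1)) * (dqg g k z.1 * dp H k z)
        + g z.1 ^ (m - 1) * ((∑ j, dqg g j z.1 * dp H j z) - dqg g k z.1 * dp H k z)
        + g z.1 ^ (m - 1) * (∑ j, Fmat g k j z * dp (dp H j) k z) := by
    intro k _
    have hgminv : g z.1 ^ m * (g z.1)⁻¹ = g z.1 ^ (m - 1) := by
      rw [hgm, mul_assoc, mul_inv_cancel₀ (hg0 z.1), mul_one]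
    rw [mul_add, ← mul_assoc (g z.1 ^ m) (g z.1)⁻¹, hgminv]
    ring
  rw [Finset.sum_congr rfl step, Finset.sum_add_distrib, Finset.sum_add_distrib,
    ← Finset.mul_sum, ← Finset.mul_sum, ← Finset.mul_sum, hT, mul_zero, add_zero,
    Finset.sum_sub_distrib, Finset.sum_const, Finset.card_univ, Fintype.card_fin,
    nsmul_eq_mul]
  rw [hm]
  push_cast
  ring
end
end

section
/- The functions C_1(x,M) = x_1² + x_2² + x_3² and C_2(x,M) = x_1M_1 + x_2M_2 + x_3M_3 are Casimir functions of the deformed bracket {·,·}_g on ℝ^6: for every smooth function f : ℝ^6 → ℝ, {C_1, f}_g = 0 and {C_2, f}_g = 0 identically on ℝ^6. -/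
open scoped BigOperators

noncomputable section

abbrev Pt3 : Type := (Fin 3 → ℝ) × (Fin 3 → ℝ)

/-- Euclidean scalar product on ℝ³ -/
def dot (a b : Fin 3 → ℝ) : ℝ := ∑ i, a i * b i

/-- totally antisymmetric Levi-Civita symbol on `Fin 3` -/
def eps (i j k : Fin 3) : ℝ :=
  ((((i : ℕ) : ℝ) - ((j : ℕ) : ℝ)) * (((j : ℕ) : ℝ) - ((k : ℕ) : ℝ))
    * (((k : ℕ) : ℝ) - ((i : ℕ) : ℝ))) / 2

/-- vector cross product on ℝ³ -/
def cross (a b : Fin 3 → ℝ) : Fin 3 → ℝ := fun i => ∑ j, ∑ k, eps i j k * a j * b k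

/-- partial derivative in the coordinate `x i` -/
def dx (f : Pt3 → ℝ) (i : Fin 3) (z : Pt3) : ℝ := fderiv ℝ f z (Pi.single i 1, 0)

/-- partial derivative in the coordinate `M i` (second group of coordinates) -/
def dM (f : Pt3 → ℝ) (i : Fin 3) (z : Pt3) : ℝ := fderiv ℝ f z (0, Pi.single i 1)

/-- partial derivative of a function of `x` only -/
def dxg (g : (Fin 3 → ℝ) → ℝ) (i : Fin 3) (x : Fin 3 → ℝ) : ℝ := fderiv ℝ g x (Pi.single i 1)

/-- bracket associated with a skew-symmetric structure matrix π with
`π_{x_i x_j} = 0`, `π_{M_i x_j} = Axm i j`, `π_{M_i M_j} = Bmm i j`. -/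
def piBracket (Axm Bmm : Fin 3 → Fin 3 → Pt3 → ℝ) (f h : Pt3 → ℝ) (z : Pt3) : ℝ :=
  ∑ i, ∑ j,
    (dM f i z * Axm i j z * dx h j z - dx f j z * Axm i j z * dM h i z
      + dM f i z * Bmm i j z * dM h j z)

/-- `π_{M_i x_j} = ε_{ijk} g(x) x_k` (summation over `k`) -/
def AxmG (g : (Fin 3 → ℝ) → ℝ) (i j : Fin 3) (z : Pt3) : ℝ :=
  ∑ k, eps i j k * g z.1 * z.1 k

/-- `π_{M_i M_j} = ε_{ijk} ( g(x) M_k + x_k ∑_m M_m ∂g/∂x_m )` (summation over `k`) -/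
def BmmG (g : (Fin 3 → ℝ) → ℝ) (i j : Fin 3) (z : Pt3) : ℝ :=
  ∑ k, eps i j k * (g z.1 * z.2 k + z.1 k * ∑ m, z.2 m * dxg g m z.1)

/-- the deformed bracket {·,·}_g on ℝ⁶ -/
def e3Bracket (g : (Fin 3 → ℝ) → ℝ) (f h : Pt3 → ℝ) (z : Pt3) : ℝ :=
  piBracket (AxmG g) (BmmG g) f h z

def P3 (i : Fin 3) : Pt3 →L[ℝ] ℝ :=
  (ContinuousLinearMap.proj i).comp (ContinuousLinearMap.fst ℝ (Fin 3 → ℝ) (Fin 3 → ℝ))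
def Q3 (i : Fin 3) : Pt3 →L[ℝ] ℝ :=
  (ContinuousLinearMap.proj i).comp (ContinuousLinearMap.snd ℝ (Fin 3 → ℝ) (Fin 3 → ℝ))

lemma hP (i : Fin 3) (z : Pt3) : HasFDerivAt (fun w : Pt3 => w.1 i) (P3 i) z :=
  (P3 i).hasFDerivAt
lemma hQ (i : Fin 3) (z : Pt3) : HasFDerivAt (fun w : Pt3 => w.2 i) (Q3 i) z :=
  (Q3 i).hasFDerivAt

lemma hd11 (z : Pt3) : HasFDerivAt (fun w : Pt3 => dot w.1 w.1)
    (∑ i : Fin 3, (z.1 i • P3 i + z.1 i • P3 i)) z := by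
  have := HasFDerivAt.fun_sum (fun i (_ : i ∈ Finset.univ) => (hP i z).mul (hP i z))
  simpa [dot] using this

lemma hd12 (z : Pt3) : HasFDerivAt (fun w : Pt3 => dot w.1 w.2)
    (∑ i : Fin 3, (z.1 i • Q3 i + z.2 i • P3 i)) z := by
  have := HasFDerivAt.fun_sum (fun i (_ : i ∈ Finset.univ) => (hP i z).mul (hQ i z))
  simpa [dot] using this

lemma dx_d11 (z : Pt3) (j : Fin 3) : dx (fun w => dot w.1 w.1) j z = 2 * z.1 j := by
  rw [dx, (hd11 z).fderiv]
  simp [P3, Pi.single_apply, mul_comm, ite_mul, Finset.sum_add_distrib, Finset.sum_ite_eq']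
  ring

lemma dM_d11 (z : Pt3) (j : Fin 3) : dM (fun w => dot w.1 w.1) j z = 0 := by
  rw [dM, (hd11 z).fderiv]
  simp [P3]

lemma dx_d12 (z : Pt3) (j : Fin 3) : dx (fun w => dot w.1 w.2) j z = z.2 j := by
  rw [dx, (hd12 z).fderiv]
  simp [P3, Q3, Pi.single_apply, mul_comm, ite_mul, mul_ite, Finset.sum_ite_eq']

lemma dM_d12 (z : Pt3) (j : Fin 3) : dM (fun w => dot w.1 w.2) j z = z.1 j := by
  rw [dM, (hd12 z).fderiv]
  simp [P3, Q3, Pi.single_apply, mul_comm, ite_mul, mul_ite, Finset.sum_ite_eq']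

/-- `(x,x)` and `(x,M)` are Casimir functions of the bracket {·,·}_g on ℝ⁶. -/
theorem casimirs_e3Bracket (g : (Fin 3 → ℝ) → ℝ)
    (hg : ContDiff ℝ (⊤ : ℕ∞) g) (hg0 : ∀ x, g x ≠ 0)
    (f : Pt3 → ℝ) (hf : ContDiff ℝ (⊤ : ℕ∞) f) :
    ∀ z : Pt3,
      e3Bracket g (fun w => dot w.1 w.1) f z = 0
        ∧ e3Bracket g (fun w => dot w.1 w.2) f z = 0 := by
  intro z
  constructor
  · simp only [e3Bracket, piBracket, AxmG, BmmG, dx_d11, dM_d11, Fin.sum_univ_three]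
    norm_num [eps]
    ring
  · simp only [e3Bracket, piBracket, AxmG, BmmG, dx_d12, dM_d12, Fin.sum_univ_three]
    norm_num [eps]
    ring
end
end

section
/- Define L_i(x,M) = g(x)^{−1} M_i for i = 1,2,3. Then at every point z = (x,M) ∈ ℝ^6 satisfying the singular-orbit condition (x,M) = x_1M_1 + x_2M_2 + x_3M_3 = 0, the functions L_i satisfy the canonical Lie–Poisson relations of e*(3): {L_i, L_j}_g(z) = ε_{ijk} L_k(z) and {L_i, x_j}_g(z) = ε_{ijk} x_k(z) (summation over k). -/
open scoped BigOperators

noncomputable section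

open ContinuousLinearMap in
lemma fderiv_L_apply (g : (Fin 3 → ℝ) → ℝ) (hg : ContDiff ℝ (⊤ : ℕ∞) g) (hg0 : ∀ x, g x ≠ 0)
    (a : Fin 3) (z v : Pt3) :
    fderiv ℝ (fun w : Pt3 => (g w.1)⁻¹ * w.2 a) z v
      = -((g z.1)⁻¹ * (g z.1)⁻¹ * fderiv ℝ g z.1 v.1 * z.2 a) + (g z.1)⁻¹ * v.2 a := by
  have h1 : HasFDerivAt (fun w : Pt3 => g w.1)
      ((fderiv ℝ g z.1).comp (fst ℝ (Fin 3 → ℝ) (Fin 3 → ℝ))) z :=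
    ((hg.differentiable (by simp) z.1).hasFDerivAt).comp z hasFDerivAt_fst
  have h2 := (hasFDerivAt_inv (hg0 z.1)).comp z h1
  have h3 : HasFDerivAt (fun w : Pt3 => w.2 a)
      ((proj a).comp (snd ℝ (Fin 3 → ℝ) (Fin 3 → ℝ))) z :=
    ((proj a).comp (snd ℝ (Fin 3 → ℝ) (Fin 3 → ℝ))).hasFDerivAt
  have h4 := h2.mul h3
  have h5 : HasFDerivAt (fun w : Pt3 => (g w.1)⁻¹ * w.2 a)
      (((g z.1)⁻¹) • (proj a).comp (snd ℝ (Fin 3 → ℝ) (Fin 3 → ℝ)) +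
        z.2 a • (smulRight 1 (-(g z.1 ^ 2)⁻¹)).comp
          ((fderiv ℝ g z.1).comp (fst ℝ (Fin 3 → ℝ) (Fin 3 → ℝ)))) z := h4
  rw [h5.fderiv]
  simp [ContinuousLinearMap.add_apply, ContinuousLinearMap.smul_apply]
  field_simp [hg0 z.1]
  ring

lemma dx_L (g : (Fin 3 → ℝ) → ℝ) (hg : ContDiff ℝ (⊤ : ℕ∞) g) (hg0 : ∀ x, g x ≠ 0)
    (a j : Fin 3) (z : Pt3) :
    dx (fun w : Pt3 => (g w.1)⁻¹ * w.2 a) j z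
      = -((g z.1)⁻¹ * (g z.1)⁻¹ * dxg g j z.1 * z.2 a) := by
  simp [dx, fderiv_L_apply g hg hg0, dxg]

lemma dM_L (g : (Fin 3 → ℝ) → ℝ) (hg : ContDiff ℝ (⊤ : ℕ∞) g) (hg0 : ∀ x, g x ≠ 0)
    (a i : Fin 3) (z : Pt3) :
    dM (fun w : Pt3 => (g w.1)⁻¹ * w.2 a) i z = if a = i then (g z.1)⁻¹ else 0 := by
  simp [dM, fderiv_L_apply g hg hg0, Pi.single_apply, mul_ite, mul_one, mul_zero]

open ContinuousLinearMap in
lemma dx_coord (j i : Fin 3) (z : Pt3) :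
    dx (fun w : Pt3 => w.1 j) i z = if j = i then (1:ℝ) else 0 := by
  have h : HasFDerivAt (fun w : Pt3 => w.1 j)
      ((proj j).comp (fst ℝ (Fin 3 → ℝ) (Fin 3 → ℝ))) z :=
    ((proj j).comp (fst ℝ (Fin 3 → ℝ) (Fin 3 → ℝ))).hasFDerivAt
  rw [dx, h.fderiv]
  simp [Pi.single_apply]

open ContinuousLinearMap in
lemma dM_coord (j i : Fin 3) (z : Pt3) :
    dM (fun w : Pt3 => w.1 j) i z = 0 := by
  have h : HasFDerivAt (fun w : Pt3 => w.1 j)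
      ((proj j).comp (fst ℝ (Fin 3 → ℝ) (Fin 3 → ℝ))) z :=
    ((proj j).comp (fst ℝ (Fin 3 → ℝ) (Fin 3 → ℝ))).hasFDerivAt
  rw [dM, h.fderiv]
  simp

lemma fin3_mk0 (h : 0 < 3) : (⟨0, h⟩ : Fin 3) = 0 := rfl
lemma fin3_mk1 (h : 1 < 3) : (⟨1, h⟩ : Fin 3) = 1 := rfl
lemma fin3_mk2 (h : 2 < 3) : (⟨2, h⟩ : Fin 3) = 2 := rfl

set_option maxHeartbeats 2000000 in
/-- on the singular orbit `(x,M) = 0` the functions `L_i = g⁻¹ M_i`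
satisfy the canonical Lie-Poisson relations of `e*(3)`. -/
theorem singular_orbit_reduction (g : (Fin 3 → ℝ) → ℝ)
    (hg : ContDiff ℝ (⊤ : ℕ∞) g) (hg0 : ∀ x, g x ≠ 0)
    (L : Fin 3 → Pt3 → ℝ) (hL : ∀ i, L i = fun z => (g z.1)⁻¹ * z.2 i) :
    ∀ z : Pt3, dot z.1 z.2 = 0 →
      (∀ i j : Fin 3, e3Bracket g (L i) (L j) z = ∑ k, eps i j k * L k z)
        ∧ (∀ i j : Fin 3, e3Bracket g (L i) (fun w => w.1 j) z = ∑ k, eps i j k * z.1 k) := by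
  intro z hz
  have hz' := hz
  simp only [dot, Fin.sum_univ_three] at hz'
  have hcu : g z.1 * (g z.1)⁻¹ = 1 := mul_inv_cancel₀ (hg0 z.1)
  constructor
  · intro i j
    simp only [hL, e3Bracket, piBracket, AxmG, BmmG, Fin.sum_univ_three,
      dx_L g hg hg0, dM_L g hg hg0]
    fin_cases i <;> fin_cases j
    · norm_num [eps, Fin.ext_iff, fin3_mk0, fin3_mk1, fin3_mk2]
      ring
    · norm_num [eps, Fin.ext_iff, fin3_mk0, fin3_mk1, fin3_mk2]
      linear_combination ((g z.1)⁻¹ ^ 2 * dxg g 2 z.1) * hz' + ((g z.1)⁻¹ * z.2 2 - (g z.1)⁻¹ ^ 2 * z.1 2 * z.2 1 * dxg g 1 z.1 - (g z.1)⁻¹ ^ 2 * z.1 2 * z.2 0 * dxg g 0 z.1 + (g z.1)⁻¹ ^ 2 * z.1 1 * z.2 1 * dxg g 2 z.1 + (g z.1)⁻¹ ^ 2 * z.1 0 * z.2 0 * dxg g 2 z.1) * hcu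
    · norm_num [eps, Fin.ext_iff, fin3_mk0, fin3_mk1, fin3_mk2]
      linear_combination (-(g z.1)⁻¹ ^ 2 * dxg g 1 z.1) * hz' + (-((g z.1)⁻¹ * z.2 1) - (g z.1)⁻¹ ^ 2 * z.1 2 * z.2 2 * dxg g 1 z.1 + (g z.1)⁻¹ ^ 2 * z.1 1 * z.2 2 * dxg g 2 z.1 + (g z.1)⁻¹ ^ 2 * z.1 1 * z.2 0 * dxg g 0 z.1 - (g z.1)⁻¹ ^ 2 * z.1 0 * z.2 0 * dxg g 1 z.1) * hcu
    · norm_num [eps, Fin.ext_iff, fin3_mk0, fin3_mk1, fin3_mk2]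
      linear_combination (-(g z.1)⁻¹ ^ 2 * dxg g 2 z.1) * hz' + (-((g z.1)⁻¹ * z.2 2) + (g z.1)⁻¹ ^ 2 * z.1 2 * z.2 1 * dxg g 1 z.1 + (g z.1)⁻¹ ^ 2 * z.1 2 * z.2 0 * dxg g 0 z.1 - (g z.1)⁻¹ ^ 2 * z.1 1 * z.2 1 * dxg g 2 z.1 - (g z.1)⁻¹ ^ 2 * z.1 0 * z.2 0 * dxg g 2 z.1) * hcu
    · norm_num [eps, Fin.ext_iff, fin3_mk0, fin3_mk1, fin3_mk2]
      ring
    · norm_num [eps, Fin.ext_iff, fin3_mk0, fin3_mk1, fin3_mk2]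
      linear_combination ((g z.1)⁻¹ ^ 2 * dxg g 0 z.1) * hz' + ((g z.1)⁻¹ * z.2 0 + (g z.1)⁻¹ ^ 2 * z.1 2 * z.2 2 * dxg g 0 z.1 + (g z.1)⁻¹ ^ 2 * z.1 1 * z.2 1 * dxg g 0 z.1 - (g z.1)⁻¹ ^ 2 * z.1 0 * z.2 2 * dxg g 2 z.1 - (g z.1)⁻¹ ^ 2 * z.1 0 * z.2 1 * dxg g 1 z.1) * hcu
    · norm_num [eps, Fin.ext_iff, fin3_mk0, fin3_mk1, fin3_mk2]
      linear_combination ((g z.1)⁻¹ ^ 2 * dxg g 1 z.1) * hz' + ((g z.1)⁻¹ * z.2 1 + (g z.1)⁻¹ ^ 2 * z.1 2 * z.2 2 * dxg g 1 z.1 - (g z.1)⁻¹ ^ 2 * z.1 1 * z.2 2 * dxg g 2 z.1 - (g z.1)⁻¹ ^ 2 * z.1 1 * z.2 0 * dxg g 0 z.1 + (g z.1)⁻¹ ^ 2 * z.1 0 * z.2 0 * dxg g 1 z.1) * hcu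
    · norm_num [eps, Fin.ext_iff, fin3_mk0, fin3_mk1, fin3_mk2]
      linear_combination (-(g z.1)⁻¹ ^ 2 * dxg g 0 z.1) * hz' + (-((g z.1)⁻¹ * z.2 0) - (g z.1)⁻¹ ^ 2 * z.1 2 * z.2 2 * dxg g 0 z.1 - (g z.1)⁻¹ ^ 2 * z.1 1 * z.2 1 * dxg g 0 z.1 + (g z.1)⁻¹ ^ 2 * z.1 0 * z.2 2 * dxg g 2 z.1 + (g z.1)⁻¹ ^ 2 * z.1 0 * z.2 1 * dxg g 1 z.1) * hcu
    · norm_num [eps, Fin.ext_iff, fin3_mk0, fin3_mk1, fin3_mk2]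
      ring
  · intro i j
    simp only [hL, e3Bracket, piBracket, AxmG, BmmG, Fin.sum_univ_three,
      dx_L g hg hg0, dM_L g hg hg0, dx_coord, dM_coord]
    fin_cases i <;> fin_cases j
    · norm_num [eps, Fin.ext_iff, fin3_mk0, fin3_mk1, fin3_mk2]
    · norm_num [eps, Fin.ext_iff, fin3_mk0, fin3_mk1, fin3_mk2]
      linear_combination (z.1 2) * hcu
    · norm_num [eps, Fin.ext_iff, fin3_mk0, fin3_mk1, fin3_mk2]
      linear_combination (z.1 1) * hcu
    · norm_num [eps, Fin.ext_iff, fin3_mk0, fin3_mk1, fin3_mk2]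
      linear_combination (z.1 2) * hcu
    · norm_num [eps, Fin.ext_iff, fin3_mk0, fin3_mk1, fin3_mk2]
    · norm_num [eps, Fin.ext_iff, fin3_mk0, fin3_mk1, fin3_mk2]
      linear_combination (z.1 0) * hcu
    · norm_num [eps, Fin.ext_iff, fin3_mk0, fin3_mk1, fin3_mk2]
      linear_combination (z.1 1) * hcu
    · norm_num [eps, Fin.ext_iff, fin3_mk0, fin3_mk1, fin3_mk2]
      linear_combination (z.1 0) * hcu
    · norm_num [eps, Fin.ext_iff, fin3_mk0, fin3_mk1, fin3_mk2]
end
end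

section
/- The Chaplygin vector field Z has the invariant measure g^{−1} dx dM: on the open set U, Σ_{i=1}^3 [ ∂/∂x_i ( g(x)^{−1} (x × ω)_i ) + ∂/∂M_i ( g(x)^{−1} (M × ω)_i ) ] = 0 identically. -/
open scoped BigOperators

noncomputable section

/-- `g(x) = √(1 - d (x, A x))` with `A = diag a` -/
def gC (a : Fin 3 → ℝ) (d : ℝ) (x : Fin 3 → ℝ) : ℝ :=
  Real.sqrt (1 - d * dot x (fun i => a i * x i))

/-- the open set `U = {1 - d (x, A x) > 0}` -/
def Uset (a : Fin 3 → ℝ) (d : ℝ) : Set Pt3 :=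
  {z | 1 - d * dot z.1 (fun i => a i * z.1 i) > 0}

/-- `π_{M_i x_j} = ε_{ijk} g x_k` (summation over `k`) -/
def AxmC (a : Fin 3 → ℝ) (d : ℝ) (i j : Fin 3) (z : Pt3) : ℝ :=
  ∑ k, eps i j k * gC a d z.1 * z.1 k

/-- `π_{M_i M_j} = ε_{ijk} ( g M_k - (d (M, A x) / g) x_k )` (summation over `k`) -/
def BmmC (a : Fin 3 → ℝ) (d : ℝ) (i j : Fin 3) (z : Pt3) : ℝ :=
  ∑ k, eps i j k * (gC a d z.1 * z.2 k
    - d * dot z.2 (fun m => a m * z.1 m) / gC a d z.1 * z.1 k)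

/-- the Chaplygin bracket {·,·}_g -/
def chBracket (a : Fin 3 → ℝ) (d : ℝ) (f h : Pt3 → ℝ) (z : Pt3) : ℝ :=
  piBracket (AxmC a d) (BmmC a d) f h z

/-- `ω = A_g M = A M + d g⁻² (x, A M) A x` -/
def omC (a : Fin 3 → ℝ) (d : ℝ) (z : Pt3) : Fin 3 → ℝ := fun i =>
  a i * z.2 i + d / (gC a d z.1) ^ 2 * dot z.1 (fun j => a j * z.2 j) * (a i * z.1 i)

/-- the Chaplygin vector field `Z(x,M) = (x × ω, M × ω)` -/
def Zch (a : Fin 3 → ℝ) (d : ℝ) (z : Pt3) : Pt3 :=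
  (cross z.1 (omC a d z), cross z.2 (omC a d z))

/-!
Split the divergence into its `x`- and `M`-parts. For fixed `x`, `M ↦ ω` is linear with the
symmetric matrix `A_g`, and `y ↦ y × f y` is divergence-free whenever `Df` is symmetric. For
fixed `M`, `g⁻¹ (x × ω) = g⁻¹ (x × AM) + d g⁻³ (x, AM) (x × Ax)`; both cross fields are
divergence-free for the same reason, and `∇(g⁻¹) = d g⁻³ Ax` is parallel to `Ax`, so what remains
is `d g⁻³ ((Ax, x × AM) + (x × Ax, AM))`, which vanishes since the triple product is alternating.
-/

open scoped Matrix

section Divergence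

variable {ι : Type*} [Fintype ι] [DecidableEq ι]

def divergence (F : (ι → ℝ) → ι → ℝ) (x : ι → ℝ) : ℝ :=
  ∑ i, fderiv ℝ F x (Pi.single i 1) i

lemma sum_apply_single_mul (L : (ι → ℝ) →L[ℝ] ℝ) (v : ι → ℝ) :
    ∑ i, L (Pi.single i 1) * v i = L v := by
  conv_rhs => rw [← Finset.univ_sum_single v, map_sum]
  refine Finset.sum_congr rfl fun i _ => ?_
  rw [mul_comm, ← smul_eq_mul, ← map_smul, ← Pi.single_smul', smul_eq_mul, mul_one]

lemma divergence_add {F G : (ι → ℝ) → ι → ℝ} {x : ι → ℝ}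
    (hF : DifferentiableAt ℝ F x) (hG : DifferentiableAt ℝ G x) :
    divergence (fun y => F y + G y) x = divergence F x + divergence G x := by
  simp only [divergence, fderiv_fun_add hF hG, _root_.add_apply, Pi.add_apply,
    Finset.sum_add_distrib]

lemma divergence_smul {φ : (ι → ℝ) → ℝ} {F : (ι → ℝ) → ι → ℝ} {x : ι → ℝ}
    (hφ : DifferentiableAt ℝ φ x) (hF : DifferentiableAt ℝ F x) :
    divergence (fun y => φ y • F y) x = fderiv ℝ φ x (F x) + φ x * divergence F x := by
  simp only [divergence, fderiv_fun_smul hφ hF, _root_.add_apply, _root_.smul_apply,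
    ContinuousLinearMap.smulRight_apply, Pi.add_apply, Pi.smul_apply, smul_eq_mul,
    Finset.sum_add_distrib, ← Finset.mul_sum, sum_apply_single_mul]
  ring

end Divergence

section Leibniz

variable {E : Type*} [NormedAddCommGroup E] [NormedSpace ℝ E] {x : E}

lemma HasFDerivAt.dotProduct {ι : Type*} [Fintype ι] {f g : E → ι → ℝ}
    {f' g' : E →L[ℝ] ι → ℝ} (hf : HasFDerivAt f f' x) (hg : HasFDerivAt g g' x) :
    HasFDerivAt (fun y => f y ⬝ᵥ g y)
      ((dotProductBilin ℝ ℝ).toContinuousBilinearMap.precompR E (f x) g' +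
        (dotProductBilin ℝ ℝ).toContinuousBilinearMap.precompL E f' (g x)) x := by
  simpa only [LinearMap.toContinuousBilinearMap_apply, dotProductBilin_apply_apply] using
    (dotProductBilin ℝ ℝ).toContinuousBilinearMap.hasFDerivAt_of_bilinear hf hg

@[fun_prop]
lemma DifferentiableAt.dotProduct {ι : Type*} [Fintype ι] {f g : E → ι → ℝ}
    (hf : DifferentiableAt ℝ f x) (hg : DifferentiableAt ℝ g x) :
    DifferentiableAt ℝ (fun y => f y ⬝ᵥ g y) x :=
  (hf.hasFDerivAt.dotProduct hg.hasFDerivAt).differentiableAt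

lemma HasFDerivAt.crossProduct {f g : E → Fin 3 → ℝ} {f' g' : E →L[ℝ] Fin 3 → ℝ}
    (hf : HasFDerivAt f f' x) (hg : HasFDerivAt g g' x) :
    HasFDerivAt (fun y => f y ⨯₃ g y)
      ((_root_.crossProduct : (Fin 3 → ℝ) →ₗ[ℝ] _).toContinuousBilinearMap.precompR E (f x) g' +
        (_root_.crossProduct : (Fin 3 → ℝ) →ₗ[ℝ] _).toContinuousBilinearMap.precompL E f' (g x))
      x := by
  simpa only [LinearMap.toContinuousBilinearMap_apply] using
    (_root_.crossProduct : (Fin 3 → ℝ) →ₗ[ℝ] _).toContinuousBilinearMap.hasFDerivAt_of_bilinear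
      hf hg

@[fun_prop]
lemma DifferentiableAt.crossProduct {f g : E → Fin 3 → ℝ}
    (hf : DifferentiableAt ℝ f x) (hg : DifferentiableAt ℝ g x) :
    DifferentiableAt ℝ (fun y => f y ⨯₃ g y) x :=
  (hf.hasFDerivAt.crossProduct hg.hasFDerivAt).differentiableAt

lemma fderiv_crossProduct_apply {f g : E → Fin 3 → ℝ}
    (hf : DifferentiableAt ℝ f x) (hg : DifferentiableAt ℝ g x) (v : E) :
    fderiv ℝ (fun y => f y ⨯₃ g y) x v = fderiv ℝ f x v ⨯₃ g x + f x ⨯₃ fderiv ℝ g x v := by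
  rw [(hf.hasFDerivAt.crossProduct hg.hasFDerivAt).fderiv]
  simp [add_comm]

end Leibniz

lemma divergence_cross_eq_zero {f : (Fin 3 → ℝ) → Fin 3 → ℝ} {f' : (Fin 3 → ℝ) →L[ℝ] Fin 3 → ℝ}
    {x : Fin 3 → ℝ} (hf : HasFDerivAt f f' x) (hsymm : ∀ u v, f' u ⬝ᵥ v = u ⬝ᵥ f' v) :
    divergence (fun y => y ⨯₃ f y) x = 0 := by
  have hij : ∀ i j, f' (Pi.single i 1) j = f' (Pi.single j 1) i := fun i j => by
    simpa using hsymm (Pi.single i 1) (Pi.single j 1)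
  simp only [divergence, fderiv_crossProduct_apply differentiableAt_fun_id hf.differentiableAt,
    fderiv_fun_id, hf.fderiv]
  simp [cross_apply, Fin.sum_univ_three, hij 0 1, hij 0 2, hij 1 2]

lemma cross_eq_crossProduct (u v : Fin 3 → ℝ) : cross u v = u ⨯₃ v := by
  ext i
  fin_cases i <;> simp [cross, eps, cross_apply, Fin.sum_univ_three] <;> ring

lemma dotProduct_mul_comm {ι : Type*} [Fintype ι] (x a v : ι → ℝ) : x ⬝ᵥ (a * v) = (a * x) ⬝ᵥ v :=
  Finset.sum_congr rfl fun i _ => by simp only [Pi.mul_apply]; ring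

section Chaplygin

variable {a : Fin 3 → ℝ} {d : ℝ} {x : Fin 3 → ℝ}

lemma gC_eq_sqrt : gC a d x = √(1 - d * (x ⬝ᵥ (a * x))) := rfl

lemma gC_pos (hx : 0 < 1 - d * (x ⬝ᵥ (a * x))) : 0 < gC a d x :=
  Real.sqrt_pos.2 hx

lemma differentiableAt_gC (hx : 0 < 1 - d * (x ⬝ᵥ (a * x))) :
    DifferentiableAt ℝ (gC a d) x := by
  have hq : DifferentiableAt ℝ (fun y => 1 - d * (y ⬝ᵥ (a * y))) x := by fun_prop
  exact hq.sqrt hx.ne'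

lemma differentiableAt_inv_gC (hx : 0 < 1 - d * (x ⬝ᵥ (a * x))) :
    DifferentiableAt ℝ (fun y => (gC a d y)⁻¹) x :=
  (differentiableAt_gC hx).inv (gC_pos hx).ne'

lemma fderiv_inv_gC_apply (hx : 0 < 1 - d * (x ⬝ᵥ (a * x))) (v : Fin 3 → ℝ) :
    fderiv ℝ (fun y => (gC a d y)⁻¹) x v = d * (gC a d x)⁻¹ ^ 3 * ((a * x) ⬝ᵥ v) := by
  have hq : HasFDerivAt (fun y => 1 - d * (y ⬝ᵥ (a * y))) _ x :=
    (((hasFDerivAt_id x).dotProduct ((hasFDerivAt_id x).const_mul a)).const_mul d).const_sub 1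
  have hG : HasFDerivAt (fun y => (gC a d y)⁻¹) _ x :=
    (hasDerivAt_inv (gC_pos hx).ne').comp_hasFDerivAt x (hq.sqrt hx.ne')
  rw [hG.fderiv]
  simp [← gC_eq_sqrt, dotProduct_comm v, dotProduct_mul_comm x a v]
  field_simp
  ring

lemma omC_eq (x M : Fin 3 → ℝ) :
    omC a d (x, M) = a * M + (d / gC a d x ^ 2 * (x ⬝ᵥ (a * M))) • (a * x) := rfl

lemma differentiableAt_omC {z : Pt3} (hz : 0 < 1 - d * (z.1 ⬝ᵥ (a * z.1))) :
    DifferentiableAt ℝ (omC a d) z := by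
  have hg : DifferentiableAt ℝ (fun w : Pt3 => gC a d w.1) z :=
    (differentiableAt_gC hz).comp z differentiableAt_fst
  rw [show omC a d = _ from funext fun w : Pt3 => omC_eq w.1 w.2]
  fun_prop (disch := exact pow_ne_zero 2 (gC_pos hz).ne')

lemma inv_gC_smul_cross_omC (y M : Fin 3 → ℝ) :
    (gC a d y)⁻¹ • (y ⨯₃ omC a d (y, M)) =
      (gC a d y)⁻¹ • (y ⨯₃ (a * M)) + (d * (gC a d y)⁻¹ ^ 3 * (y ⬝ᵥ (a * M))) • (y ⨯₃ (a * y)) := by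
  rw [omC_eq, map_add, map_smul, smul_add, smul_smul]
  congr 2
  ring

lemma divergence_inv_gC_smul_cross_omC_fst (hx : 0 < 1 - d * (x ⬝ᵥ (a * x))) (M : Fin 3 → ℝ) :
    divergence (fun y => (gC a d y)⁻¹ • (y ⨯₃ omC a d (y, M))) x = 0 := by
  set m := a * M
  have hG := differentiableAt_inv_gC hx
  have hψ : DifferentiableAt ℝ (fun y => d * (gC a d y)⁻¹ ^ 3 * (y ⬝ᵥ m)) x := by fun_prop
  have hψ' : fderiv ℝ (fun y => d * (gC a d y)⁻¹ ^ 3 * (y ⬝ᵥ m)) x (x ⨯₃ (a * x)) =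
      d * (gC a d x)⁻¹ ^ 3 * ((x ⨯₃ (a * x)) ⬝ᵥ m) := by
    have h : HasFDerivAt (fun y => d * (gC a d y)⁻¹ ^ 3 * (y ⬝ᵥ m)) _ x :=
      ((hG.hasFDerivAt.pow 3).const_mul d).mul
        ((hasFDerivAt_id x).dotProduct (hasFDerivAt_const m x))
    rw [h.fderiv]
    simp [fderiv_inv_gC_apply hx, dot_cross_self]
  have hcm : divergence (fun y => y ⨯₃ m) x = 0 :=
    divergence_cross_eq_zero (hasFDerivAt_const m x) (by simp)
  have hca : divergence (fun y => y ⨯₃ (a * y)) x = 0 :=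
    divergence_cross_eq_zero ((hasFDerivAt_id x).const_mul a) fun u v => by
      simpa using (dotProduct_mul_comm u a v).symm
  have htriple : (a * x) ⬝ᵥ (x ⨯₃ m) + (x ⨯₃ (a * x)) ⬝ᵥ m = 0 := by
    rw [dotProduct_comm (x ⨯₃ _), triple_product_permutation m, triple_product_permutation x,
      ← cross_anticomm x m, dotProduct_neg, add_neg_cancel]
  simp_rw [inv_gC_smul_cross_omC]
  rw [divergence_add (by fun_prop) (by fun_prop), divergence_smul hG (by fun_prop),
    divergence_smul hψ (by fun_prop), hcm, hca, fderiv_inv_gC_apply hx, hψ']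
  linear_combination d * (gC a d x)⁻¹ ^ 3 * htriple

lemma divergence_inv_gC_smul_cross_omC_snd (x M : Fin 3 → ℝ) :
    divergence (fun N => (gC a d x)⁻¹ • (N ⨯₃ omC a d (x, N))) M = 0 := by
  have hω : HasFDerivAt (fun N => omC a d (x, N)) _ M :=
    ((hasFDerivAt_id M).const_mul a).add
      ((((hasFDerivAt_const x M).dotProduct ((hasFDerivAt_id M).const_mul a)).const_mul
        (d / gC a d x ^ 2)).smul_const (a * x))
  have hcross : divergence (fun N => N ⨯₃ omC a d (x, N)) M = 0 := by
    refine divergence_cross_eq_zero hω fun u v => ?_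
    simp [dotProduct_mul_comm x a, dotProduct_mul_comm u a v, dotProduct_comm u (a * x)]
    ring
  rw [divergence_smul (differentiableAt_const _)
    (differentiableAt_fun_id.crossProduct hω.differentiableAt), hcross]
  simp

end Chaplygin

lemma sum_dx_eq_divergence {F : Pt3 → Fin 3 → ℝ} {z : Pt3} (hF : DifferentiableAt ℝ F z) :
    ∑ i, dx (fun w => F w i) i z = divergence (fun x => F (x, z.2)) z.1 := by
  have hx : fderiv ℝ (fun x => F (x, z.2)) z.1 = (fderiv ℝ F z).comp (.inl ℝ _ _) :=
    (hF.hasFDerivAt.comp z.1 (hasFDerivAt_prodMk_left z.1 z.2)).fderiv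
  have hi : ∀ i, fderiv ℝ (fun w => F w i) z = (ContinuousLinearMap.proj i).comp (fderiv ℝ F z) :=
    fun i => (hasFDerivAt_pi'.1 hF.hasFDerivAt i).fderiv
  simp [divergence, dx, hx, hi]

lemma sum_dM_eq_divergence {F : Pt3 → Fin 3 → ℝ} {z : Pt3} (hF : DifferentiableAt ℝ F z) :
    ∑ i, dM (fun w => F w i) i z = divergence (fun M => F (z.1, M)) z.2 := by
  have hM : fderiv ℝ (fun M => F (z.1, M)) z.2 = (fderiv ℝ F z).comp (.inr ℝ _ _) :=
    (hF.hasFDerivAt.comp z.2 (hasFDerivAt_prodMk_right z.1 z.2)).fderiv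
  have hi : ∀ i, fderiv ℝ (fun w => F w i) z = (ContinuousLinearMap.proj i).comp (fderiv ℝ F z) :=
    fun i => (hasFDerivAt_pi'.1 hF.hasFDerivAt i).fderiv
  simp [divergence, dM, hM, hi]

/-- the Chaplygin vector field has the invariant measure `g⁻¹ dx dM`. -/
theorem chaplygin_invariant_measure (a : Fin 3 → ℝ) (d : ℝ) :
    ∀ z : Pt3, z ∈ Uset a d →
      (∑ i, (dx (fun w => (gC a d w.1)⁻¹ * cross w.1 (omC a d w) i) i z
        + dM (fun w => (gC a d w.1)⁻¹ * cross w.2 (omC a d w) i) i z)) = 0 := by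
  intro z hz
  change 0 < 1 - d * (z.1 ⬝ᵥ (a * z.1)) at hz
  have hG : DifferentiableAt ℝ (fun w : Pt3 => (gC a d w.1)⁻¹) z :=
    (differentiableAt_inv_gC hz).comp z differentiableAt_fst
  have hω := differentiableAt_omC hz
  simp only [cross_eq_crossProduct]
  rw [Finset.sum_add_distrib, sum_dx_eq_divergence, sum_dM_eq_divergence]
  · calc _ = 0 + 0 := congrArg₂ (· + ·) (divergence_inv_gC_smul_cross_omC_fst hz z.2)
            (divergence_inv_gC_smul_cross_omC_snd z.1 z.2)
      _ = 0 := add_zero 0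
  · exact hG.smul (differentiableAt_snd.crossProduct hω)
  · exact hG.smul (differentiableAt_fst.crossProduct hω)
end
end

section
/- With respect to the Chaplygin bracket, the integrals of the Chaplygin ball are in involution and H_3, H_4 are Casimirs: on U one has {H_1, H_2}_g = 0 where H_1 = (M, A_gM) and H_2 = (M,M); moreover {(x,x), f}_g = 0 and {(x,M), f}_g = 0 for every smooth function f on U. -/
open scoped BigOperators

noncomputable section

namespace ChAux

def Lx (i : Fin 3) : Pt3 →L[ℝ] ℝ :=
  (ContinuousLinearMap.proj i).comp (ContinuousLinearMap.fst ℝ (Fin 3 → ℝ) (Fin 3 → ℝ))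
def Lm (i : Fin 3) : Pt3 →L[ℝ] ℝ :=
  (ContinuousLinearMap.proj i).comp (ContinuousLinearMap.snd ℝ (Fin 3 → ℝ) (Fin 3 → ℝ))
lemma hx (i : Fin 3) (z : Pt3) : HasFDerivAt (fun w : Pt3 => w.1 i) (Lx i) z :=
  (Lx i).hasFDerivAt
lemma hm (i : Fin 3) (z : Pt3) : HasFDerivAt (fun w : Pt3 => w.2 i) (Lm i) z :=
  (Lm i).hasFDerivAt
lemma Lx_x (i j : Fin 3) : Lx i (Pi.single j (1:ℝ), 0) = if i = j then 1 else 0 := by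
  simp [Lx, Pi.single_apply]
lemma Lx_m (i j : Fin 3) : Lx i (0, Pi.single j (1:ℝ)) = 0 := by simp [Lx]
lemma Lm_x (i j : Fin 3) : Lm i (Pi.single j (1:ℝ), 0) = 0 := by simp [Lm]
lemma Lm_m (i j : Fin 3) : Lm i (0, Pi.single j (1:ℝ)) = if i = j then 1 else 0 := by
  simp [Lm, Pi.single_apply]

/-- S(z) = (x, A M) -/
def Sf (a : Fin 3 → ℝ) (z : Pt3) : ℝ := dot z.1 (fun i => a i * z.2 i)
/-- Q(z) = 1 - d (x, A x) = g² -/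
def Qf (a : Fin 3 → ℝ) (d : ℝ) (z : Pt3) : ℝ := 1 - d * dot z.1 (fun i => a i * z.1 i)

def DS (a : Fin 3 → ℝ) (z : Pt3) : Pt3 →L[ℝ] ℝ :=
  ∑ i, (z.1 i • (a i • Lm i) + (a i * z.2 i) • Lx i)
def DS2 (a : Fin 3 → ℝ) (z : Pt3) : Pt3 →L[ℝ] ℝ :=
  ∑ i, (z.2 i • (a i • Lm i) + (a i * z.2 i) • Lm i)
def DQ (a : Fin 3 → ℝ) (d : ℝ) (z : Pt3) : Pt3 →L[ℝ] ℝ :=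
  -(d • ∑ i, (z.1 i • (a i • Lx i) + (a i * z.1 i) • Lx i))

lemma hS (a : Fin 3 → ℝ) (z : Pt3) : HasFDerivAt (Sf a) (DS a z) z := by
  have := HasFDerivAt.fun_sum (u := Finset.univ) (A := fun i (w : Pt3) => w.1 i * (a i * w.2 i))
    (A' := fun i => z.1 i • (a i • Lm i) + (a i * z.2 i) • Lx i)
    (fun i _ => (hx i z).mul ((hm i z).const_mul (a i)))
  show HasFDerivAt (fun w => Sf a w) (DS a z) z
  simpa [Sf, dot, DS] using this

lemma hS2 (a : Fin 3 → ℝ) (z : Pt3) :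
    HasFDerivAt (fun w : Pt3 => dot w.2 (fun i => a i * w.2 i)) (DS2 a z) z := by
  have := HasFDerivAt.fun_sum (u := Finset.univ) (A := fun i (w : Pt3) => w.2 i * (a i * w.2 i))
    (A' := fun i => z.2 i • (a i • Lm i) + (a i * z.2 i) • Lm i)
    (fun i _ => (hm i z).mul ((hm i z).const_mul (a i)))
  simpa [dot, DS2] using this

lemma hQ (a : Fin 3 → ℝ) (d : ℝ) (z : Pt3) : HasFDerivAt (Qf a d) (DQ a d z) z := by
  have h0 := HasFDerivAt.fun_sum (u := Finset.univ) (A := fun i (w : Pt3) => w.1 i * (a i * w.1 i))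
    (A' := fun i => z.1 i • (a i • Lx i) + (a i * z.1 i) • Lx i)
    (fun i _ => (hx i z).mul ((hx i z).const_mul (a i)))
  have := (h0.const_mul d).const_sub 1
  show HasFDerivAt (fun w => Qf a d w) (DQ a d z) z
  simpa [Qf, dot, DQ, Finset.smul_sum] using this


lemma Uopen (a : Fin 3 → ℝ) (d : ℝ) : IsOpen (Uset a d) := by
  have hc : Continuous fun z : Pt3 => 1 - d * dot z.1 (fun i => a i * z.1 i) := by
    simp only [dot]
    fun_prop
  exact isOpen_lt continuous_const hc

lemma H1_eq_on (a : Fin 3 → ℝ) (d : ℝ) (w : Pt3) (hw : w ∈ Uset a d) :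
    dot w.2 (omC a d w)
      = dot w.2 (fun i => a i * w.2 i) + d * (Sf a w * Sf a w) * (Qf a d w)⁻¹ := by
  have hq : 0 < Qf a d w := hw
  have gsq : gC a d w.1 ^ 2 = Qf a d w := Real.sq_sqrt hq.le
  have hgq := gsq
  simp only [omC, dot, Sf, Qf, Fin.sum_univ_three] at *
  rw [gsq]
  field_simp
  ring

def DH1 (a : Fin 3 → ℝ) (d : ℝ) (z : Pt3) : Pt3 →L[ℝ] ℝ :=
  DS2 a z + ((d * (Sf a z * Sf a z)) • ((-(Qf a d z ^ 2)⁻¹) • DQ a d z)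
    + (Qf a d z)⁻¹ • (d • (Sf a z • DS a z + Sf a z • DS a z)))

lemma fderiv_H1 (a : Fin 3 → ℝ) (d : ℝ) (z : Pt3) (hz : z ∈ Uset a d) :
    fderiv ℝ (fun w => dot w.2 (omC a d w)) z = DH1 a d z := by
  have hq : (0:ℝ) < Qf a d z := hz
  have hinv : HasFDerivAt (fun w => (Qf a d w)⁻¹)
      ((-(Qf a d z ^ 2)⁻¹) • DQ a d z) z :=
    (hasDerivAt_inv hq.ne').comp_hasFDerivAt z (hQ a d z)
  have hnum : HasFDerivAt (fun w => d * (Sf a w * Sf a w))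
      (d • (Sf a z • DS a z + Sf a z • DS a z)) z :=
    ((hS a z).mul (hS a z)).const_mul d
  have hH1' : HasFDerivAt
      (fun w : Pt3 => dot w.2 (fun i => a i * w.2 i) + d * (Sf a w * Sf a w) * (Qf a d w)⁻¹)
      (DH1 a d z) z := (hS2 a z).add (hnum.mul hinv)
  have heq : (fun w => dot w.2 (omC a d w)) =ᶠ[nhds z]
      (fun w : Pt3 => dot w.2 (fun i => a i * w.2 i) + d * (Sf a w * Sf a w) * (Qf a d w)⁻¹) :=
    Filter.eventually_of_mem ((Uopen a d).mem_nhds hz) (fun w hw => H1_eq_on a d w hw)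
  rw [heq.fderiv_eq, hH1'.fderiv]


lemma dM_H1 (a : Fin 3 → ℝ) (d : ℝ) (z : Pt3) (hz : z ∈ Uset a d) (i : Fin 3) :
    dM (fun w => dot w.2 (omC a d w)) i z
      = 2 * (a i * z.2 i) + 2 * d * Sf a z * (a i * z.1 i) / Qf a d z := by
  rw [dM, fderiv_H1 a d z hz]
  simp only [DH1, DS, DS2, DQ, ContinuousLinearMap.add_apply, ContinuousLinearMap.coe_smul',
    ContinuousLinearMap.neg_apply, ContinuousLinearMap.sum_apply, Pi.smul_apply,
    Lx_x, Lx_m, Lm_x, Lm_m, smul_eq_mul, ContinuousLinearMap.smul_apply,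
    mul_ite, ite_mul, mul_zero, zero_mul, mul_one, Finset.sum_add_distrib,
    Finset.sum_ite_eq', Finset.mem_univ, if_true, Finset.sum_const_zero, add_zero, zero_add,
    mul_neg, neg_mul, neg_zero, Finset.sum_neg_distrib]
  field_simp
  ring

lemma dx_H1 (a : Fin 3 → ℝ) (d : ℝ) (z : Pt3) (hz : z ∈ Uset a d) (j : Fin 3) :
    dx (fun w => dot w.2 (omC a d w)) j z
      = 2 * d^2 * Sf a z^2 * (a j * z.1 j) / Qf a d z^2
        + 2 * d * Sf a z * (a j * z.2 j) / Qf a d z := by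
  rw [dx, fderiv_H1 a d z hz]
  simp only [DH1, DS, DS2, DQ, ContinuousLinearMap.add_apply, ContinuousLinearMap.coe_smul',
    ContinuousLinearMap.neg_apply, ContinuousLinearMap.sum_apply, Pi.smul_apply,
    Lx_x, Lx_m, Lm_x, Lm_m, smul_eq_mul, ContinuousLinearMap.smul_apply,
    mul_ite, ite_mul, mul_zero, zero_mul, mul_one, Finset.sum_add_distrib,
    Finset.sum_ite_eq', Finset.mem_univ, if_true, Finset.sum_const_zero, add_zero, zero_add,
    mul_neg, neg_mul, neg_zero, Finset.sum_neg_distrib]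
  field_simp
  ring

lemma dx_dotxx (z : Pt3) (j : Fin 3) : dx (fun w => dot w.1 w.1) j z = 2 * z.1 j := by
  have h : HasFDerivAt (fun w : Pt3 => dot w.1 w.1)
      (∑ i, (z.1 i • Lx i + z.1 i • Lx i)) z := by
    have := HasFDerivAt.fun_sum (u := Finset.univ) (A := fun i (w : Pt3) => w.1 i * w.1 i)
      (A' := fun i => z.1 i • Lx i + z.1 i • Lx i) (fun i _ => (hx i z).mul (hx i z))
    simpa [dot] using this
  rw [dx, h.fderiv]
  simp only [ContinuousLinearMap.sum_apply, ContinuousLinearMap.add_apply,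
    ContinuousLinearMap.smul_apply, Lx_x, smul_eq_mul, mul_ite, mul_one, mul_zero]
  rw [Finset.sum_add_distrib]
  simp [Finset.sum_ite_eq']
  ring

lemma dM_dotxx (z : Pt3) (i : Fin 3) : dM (fun w => dot w.1 w.1) i z = 0 := by
  have h : HasFDerivAt (fun w : Pt3 => dot w.1 w.1)
      (∑ i, (z.1 i • Lx i + z.1 i • Lx i)) z := by
    have := HasFDerivAt.fun_sum (u := Finset.univ) (A := fun i (w : Pt3) => w.1 i * w.1 i)
      (A' := fun i => z.1 i • Lx i + z.1 i • Lx i) (fun i _ => (hx i z).mul (hx i z))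
    simpa [dot] using this
  rw [dM, h.fderiv]
  simp [ContinuousLinearMap.sum_apply, ContinuousLinearMap.add_apply,
    ContinuousLinearMap.smul_apply, Lx_m]

lemma hxM (z : Pt3) : HasFDerivAt (fun w : Pt3 => dot w.1 w.2)
    (∑ i, (z.1 i • Lm i + z.2 i • Lx i)) z := by
  have := HasFDerivAt.fun_sum (u := Finset.univ) (A := fun i (w : Pt3) => w.1 i * w.2 i)
    (A' := fun i => z.1 i • Lm i + z.2 i • Lx i) (fun i _ => (hx i z).mul (hm i z))
  simpa [dot] using this

lemma dx_dotxM (z : Pt3) (j : Fin 3) : dx (fun w => dot w.1 w.2) j z = z.2 j := by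
  rw [dx, (hxM z).fderiv]
  simp only [ContinuousLinearMap.sum_apply, ContinuousLinearMap.add_apply,
    ContinuousLinearMap.smul_apply, Lx_x, Lm_x, smul_eq_mul, mul_ite, mul_one, mul_zero]
  rw [Finset.sum_add_distrib]
  simp [Finset.sum_ite_eq']

lemma dM_dotxM (z : Pt3) (i : Fin 3) : dM (fun w => dot w.1 w.2) i z = z.1 i := by
  rw [dM, (hxM z).fderiv]
  simp only [ContinuousLinearMap.sum_apply, ContinuousLinearMap.add_apply,
    ContinuousLinearMap.smul_apply, Lx_m, Lm_m, smul_eq_mul, mul_ite, mul_one, mul_zero]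
  rw [Finset.sum_add_distrib]
  simp [Finset.sum_ite_eq']

lemma hMM (z : Pt3) : HasFDerivAt (fun w : Pt3 => dot w.2 w.2)
    (∑ i, (z.2 i • Lm i + z.2 i • Lm i)) z := by
  have := HasFDerivAt.fun_sum (u := Finset.univ) (A := fun i (w : Pt3) => w.2 i * w.2 i)
    (A' := fun i => z.2 i • Lm i + z.2 i • Lm i) (fun i _ => (hm i z).mul (hm i z))
  simpa [dot] using this

lemma dx_dotMM (z : Pt3) (j : Fin 3) : dx (fun w => dot w.2 w.2) j z = 0 := by
  rw [dx, (hMM z).fderiv]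
  simp [ContinuousLinearMap.sum_apply, ContinuousLinearMap.add_apply,
    ContinuousLinearMap.smul_apply, Lm_x]

lemma dM_dotMM (z : Pt3) (i : Fin 3) : dM (fun w => dot w.2 w.2) i z = 2 * z.2 i := by
  rw [dM, (hMM z).fderiv]
  simp only [ContinuousLinearMap.sum_apply, ContinuousLinearMap.add_apply,
    ContinuousLinearMap.smul_apply, Lm_m, smul_eq_mul, mul_ite, mul_one, mul_zero]
  rw [Finset.sum_add_distrib]
  simp [Finset.sum_ite_eq']
  ring

end ChAux

set_option maxHeartbeats 2000000 in
/-- `{H₁,H₂}_g = 0` on `U`, and `(x,x)`, `(x,M)` are Casimirs of the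
Chaplygin bracket. -/
theorem chaplygin_involution_casimirs (a : Fin 3 → ℝ) (d : ℝ) :
    (∀ z : Pt3, z ∈ Uset a d →
      chBracket a d (fun w => dot w.2 (omC a d w)) (fun w => dot w.2 w.2) z = 0)
    ∧ (∀ f : Pt3 → ℝ, ContDiffOn ℝ (⊤ : ℕ∞) f (Uset a d) → ∀ z ∈ Uset a d,
        chBracket a d (fun w => dot w.1 w.1) f z = 0
        ∧ chBracket a d (fun w => dot w.1 w.2) f z = 0) := by
  constructor
  · intro z hz
    have hq : (0:ℝ) < ChAux.Qf a d z := hz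
    have hGpos : 0 < gC a d z.1 := Real.sqrt_pos.mpr hq
    have hG2 : gC a d z.1 ^ 2 = ChAux.Qf a d z := Real.sq_sqrt hq.le
    have hGne : gC a d z.1 ≠ 0 := hGpos.ne'
    simp only [chBracket, piBracket, AxmC, BmmC,
      ChAux.dM_H1 a d z hz, ChAux.dx_H1 a d z hz, ChAux.dx_dotMM, ChAux.dM_dotMM]
    rw [← hG2]
    simp only [ChAux.Sf, dot, eps, Fin.sum_univ_three, Fin.val_zero, Fin.val_one, Fin.val_two,
      Nat.cast_zero, Nat.cast_one, Nat.cast_ofNat]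
    field_simp
    ring
  · intro f _hf z hz
    have hq : (0:ℝ) < ChAux.Qf a d z := hz
    have hGpos : 0 < gC a d z.1 := Real.sqrt_pos.mpr hq
    have hGne : gC a d z.1 ≠ 0 := hGpos.ne'
    constructor
    · simp only [chBracket, piBracket, ChAux.dx_dotxx, ChAux.dM_dotxx]
      simp only [AxmC, BmmC, dot, eps, Fin.sum_univ_three, Fin.val_zero,
        Fin.val_one, Fin.val_two, Nat.cast_zero, Nat.cast_one, Nat.cast_ofNat]
      field_simp
      ring
    · simp only [chBracket, piBracket, ChAux.dx_dotxM, ChAux.dM_dotxM]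
      simp only [AxmC, BmmC, dot, eps, Fin.sum_univ_three, Fin.val_zero,
        Fin.val_one, Fin.val_two, Nat.cast_zero, Nat.cast_one, Nat.cast_ofNat]
      field_simp
      ring
end
end

section
/- The Chaplygin ball equations are conformally Hamiltonian with conformal factor g^{−1} and Hamiltonian H = (M, A_gM)/2: at every point of U, g^{−1}{H, x_i}_g = (x × ω)_i and g^{−1}{H, M_i}_g = (M × ω)_i for i = 1,2,3, where ω = A_gM; that is, the Chaplygin vector field Z = (x × ω, M × ω) equals g^{−1} times the Hamiltonian vector field of H with respect to the Chaplygin bracket. -/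
open scoped BigOperators

noncomputable section

/-!
On `U` we have `g² = 1 - d (x, A x)`, so `H` agrees near every point of `U` with the rational
function `((M, A M) + d (x, A M)² / (1 - d (x, A x))) / 2`, whose gradient is
`∂H/∂M = ω` and `∂H/∂x = λ ω` with `λ = d g⁻² (x, A M)`.
For any `f`, the structure matrix gives `{f, x}_g = g x × ∂f/∂M` and
`{f, M}_g = g M × ∂f/∂M + g x × ∂f/∂x - (d (M, A x) / g) x × ∂f/∂M`.
For `f = H` the last two terms cancel, since `g λ = d (x, A M) / g`, leaving `g (x × ω, M × ω)`.
-/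

namespace Chaplygin

open Finset

lemma eps_cyclic (i j k : Fin 3) : eps i j k = eps j k i := by
  unfold eps; ring

lemma eps_swap (i j k : Fin 3) : eps i j k = -eps i k j := by
  unfold eps; ring

lemma cross_anticomm (u v : Fin 3 → ℝ) : cross u v = -cross v u := by
  funext l
  simp only [cross, Pi.neg_apply, ← sum_neg_distrib]
  rw [sum_comm]
  exact sum_congr rfl fun j _ => sum_congr rfl fun k _ => by rw [eps_swap]; ring

lemma cross_smul_right (u v : Fin 3 → ℝ) (c : ℝ) : cross u (c • v) = c • cross u v := by
  funext l
  simp only [cross, Pi.smul_apply, smul_eq_mul, mul_sum]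
  exact sum_congr rfl fun j _ => sum_congr rfl fun k _ => by ring

lemma sum_mul_sum_eps (u v : Fin 3 → ℝ) (l : Fin 3) :
    ∑ i, u i * ∑ k, eps i l k * v k = cross v u l := by
  simp only [cross, mul_sum]
  rw [sum_comm]
  exact sum_congr rfl fun i _ => sum_congr rfl fun k _ => by rw [eps_cyclic]; ring

def gradX (f : Pt3 → ℝ) (z : Pt3) : Fin 3 → ℝ := fun j => dx f j z

def gradM (f : Pt3 → ℝ) (z : Pt3) : Fin 3 → ℝ := fun j => dM f j z

section PiBracket

variable (Axm Bmm : Fin 3 → Fin 3 → Pt3 → ℝ) (f : Pt3 → ℝ) (l : Fin 3) (z : Pt3)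

lemma piBracket_fst :
    piBracket Axm Bmm f (fun w => w.1 l) z = ∑ i, gradM f z i * Axm i l z := by
  simp [piBracket, dx, dM, gradM, fderiv_apply, fderiv_fst, Pi.single_apply]

lemma piBracket_snd :
    piBracket Axm Bmm f (fun w => w.2 l) z
      = ∑ i, gradM f z i * Bmm i l z - ∑ j, gradX f z j * Axm l j z := by
  simp [piBracket, dx, dM, gradM, gradX, fderiv_apply, fderiv_snd, Pi.single_apply,
    sum_add_distrib, sub_eq_neg_add]

end PiBracket

section ChBracket

variable (a : Fin 3 → ℝ) (d : ℝ) (u : Fin 3 → ℝ) (f : Pt3 → ℝ) (l : Fin 3) (z : Pt3)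

lemma sum_mul_AxmC_left : ∑ i, u i * AxmC a d i l z = gC a d z.1 * cross z.1 u l := by
  rw [← sum_mul_sum_eps, mul_sum]
  simp only [AxmC, mul_sum]
  exact sum_congr rfl fun i _ => sum_congr rfl fun k _ => by ring

lemma sum_mul_AxmC_right : ∑ j, u j * AxmC a d l j z = -(gC a d z.1 * cross z.1 u l) := by
  rw [cross_anticomm, Pi.neg_apply, mul_neg, neg_neg]
  simp only [AxmC, cross, mul_sum]
  exact sum_congr rfl fun j _ => sum_congr rfl fun k _ => by ring

lemma sum_mul_BmmC :
    ∑ i, u i * BmmC a d i l z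
      = gC a d z.1 * cross z.2 u l
        - d * dot z.2 (fun m => a m * z.1 m) / gC a d z.1 * cross z.1 u l := by
  rw [← sum_mul_sum_eps, ← sum_mul_sum_eps, mul_sum, mul_sum, ← sum_sub_distrib]
  simp only [BmmC, mul_sum, ← sum_sub_distrib]
  exact sum_congr rfl fun i _ => sum_congr rfl fun k _ => by ring

lemma chBracket_fst :
    chBracket a d f (fun w => w.1 l) z = gC a d z.1 * cross z.1 (gradM f z) l := by
  rw [chBracket, piBracket_fst, sum_mul_AxmC_left]

lemma chBracket_snd :
    chBracket a d f (fun w => w.2 l) z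
      = gC a d z.1 * cross z.2 (gradM f z) l + gC a d z.1 * cross z.1 (gradX f z) l
        - d * dot z.2 (fun m => a m * z.1 m) / gC a d z.1 * cross z.1 (gradM f z) l := by
  rw [chBracket, piBracket_snd, sum_mul_BmmC, sum_mul_AxmC_right]
  ring

end ChBracket

section Hamiltonian

variable (a : Fin 3 → ℝ) (d : ℝ)

def gSq (x : Fin 3 → ℝ) : ℝ := 1 - d * dot x (fun i => a i * x i)

def chHamiltonian (w : Pt3) : ℝ := dot w.2 (omC a d w) / 2

def hamiltonianLocal (w : Pt3) : ℝ :=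
  (dot w.2 (fun i => a i * w.2 i) + d * dot w.1 (fun i => a i * w.2 i) ^ 2 * (gSq a d w.1)⁻¹) / 2

lemma dot_diag_comm (u v : Fin 3 → ℝ) :
    dot u (fun i => a i * v i) = dot v (fun i => a i * u i) :=
  sum_congr rfl fun i _ => by ring

lemma dot_omC (u : Fin 3 → ℝ) (w : Pt3) :
    dot u (omC a d w) = dot u (fun i => a i * w.2 i)
      + d / gC a d w.1 ^ 2 * dot w.1 (fun i => a i * w.2 i) * dot u (fun i => a i * w.1 i) := by
  simp only [dot, omC, mul_add, sum_add_distrib, mul_sum]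
  exact congrArg _ (sum_congr rfl fun i _ => by ring)

lemma isOpen_Uset : IsOpen (Uset a d) :=
  isOpen_lt continuous_const (by unfold dot; fun_prop)

lemma hasFDerivAt_dot_diag {E : Type*} [NormedAddCommGroup E] [NormedSpace ℝ E]
    {u v : E → Fin 3 → ℝ} {u' v' : E →L[ℝ] Fin 3 → ℝ} {z : E}
    (hu : HasFDerivAt u u' z) (hv : HasFDerivAt v v' z) :
    HasFDerivAt (fun w => dot (u w) (fun i => a i * v w i))
      (∑ i, (u z i • a i • (ContinuousLinearMap.proj i ∘L v')
        + (a i * v z i) • (ContinuousLinearMap.proj i ∘L u'))) z :=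
  HasFDerivAt.fun_sum fun i _ =>
    ((hasFDerivAt_apply i _).comp z hu).mul (((hasFDerivAt_apply i _).comp z hv).const_mul (a i))

variable {a d}

lemma gC_sq {x : Fin 3 → ℝ} (hx : 0 ≤ gSq a d x) : gC a d x ^ 2 = gSq a d x :=
  Real.sq_sqrt hx

lemma chHamiltonian_eventuallyEq {z : Pt3} (hz : z ∈ Uset a d) :
    chHamiltonian a d =ᶠ[nhds z] hamiltonianLocal a d := by
  filter_upwards [(isOpen_Uset a d).mem_nhds hz] with w hw
  rw [chHamiltonian, hamiltonianLocal, dot_omC, gC_sq (le_of_lt hw), dot_diag_comm a w.2 w.1]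
  ring

lemma fderiv_chHamiltonian {z : Pt3} (hz : z ∈ Uset a d) (v : Pt3) :
    fderiv ℝ (chHamiltonian a d) z v
      = dot v.2 (omC a d z)
        + d / gC a d z.1 ^ 2 * dot z.1 (fun i => a i * z.2 i) * dot v.1 (omC a d z) := by
  have hS : gSq a d z.1 ≠ 0 := ne_of_gt hz
  have hfst := hasFDerivAt_fst (𝕜 := ℝ) (p := z)
  have hsnd := hasFDerivAt_snd (𝕜 := ℝ) (p := z)
  have hK := hasFDerivAt_dot_diag (a := a) hsnd hsnd
  have hP := hasFDerivAt_dot_diag (a := a) hfst hsnd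
  have hgSq : HasFDerivAt (fun w : Pt3 => gSq a d w.1) _ z :=
    (hasFDerivAt_dot_diag (a := a) hfst hfst).const_mul d |>.const_sub 1
  have hH : HasFDerivAt (hamiltonianLocal a d) _ z :=
    (hK.add (((hP.pow 2).const_mul d).mul ((hasFDerivAt_inv hS).comp z hgSq))).mul_const 2⁻¹
  rw [(chHamiltonian_eventuallyEq hz).fderiv_eq, hH.fderiv, dot_omC, dot_omC,
    gC_sq (le_of_lt hz)]
  simp only [Fin.sum_univ_three, Fin.isValue, dot, smul_add, neg_add_rev,
    ContinuousLinearMap.comp_add, ContinuousLinearMap.comp_neg, ContinuousLinearMap.comp_smulₛₗ,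
    Real.ringHom_apply, smul_neg, Function.comp_apply, Nat.add_one_sub_one, pow_one, nsmul_eq_mul,
    Nat.cast_ofNat, add_apply, smul_apply, ContinuousLinearMap.comp_apply,
    ContinuousLinearMap.coe_snd', ContinuousLinearMap.proj_apply, smul_eq_mul, neg_apply,
    ContinuousLinearMap.coe_fst', ContinuousLinearMap.toSpanSingleton_apply, mul_neg, neg_neg]
  field_simp
  ring

lemma gradM_chHamiltonian {z : Pt3} (hz : z ∈ Uset a d) :
    gradM (chHamiltonian a d) z = omC a d z := by
  funext j
  simp [gradM, dM, fderiv_chHamiltonian hz, dot, Pi.single_apply]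

lemma gradX_chHamiltonian {z : Pt3} (hz : z ∈ Uset a d) :
    gradX (chHamiltonian a d) z
      = (d / gC a d z.1 ^ 2 * dot z.1 (fun i => a i * z.2 i)) • omC a d z := by
  funext j
  simp [gradX, dx, fderiv_chHamiltonian hz, dot, Pi.single_apply]

end Hamiltonian

end Chaplygin

/-- the Chaplygin ball equations are conformally Hamiltonian with
conformal factor `g⁻¹` and Hamiltonian `H = (M, A_g M)/2`. -/
theorem chaplygin_conformally_hamiltonian (a : Fin 3 → ℝ) (d : ℝ) :
    ∀ z : Pt3, z ∈ Uset a d → ∀ i : Fin 3,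
      (gC a d z.1)⁻¹ *
        chBracket a d (fun w => dot w.2 (omC a d w) / 2) (fun w => w.1 i) z
        = cross z.1 (omC a d z) i
      ∧ (gC a d z.1)⁻¹ *
        chBracket a d (fun w => dot w.2 (omC a d w) / 2) (fun w => w.2 i) z
        = cross z.2 (omC a d z) i := by
  intro z hz i
  have hg : gC a d z.1 ≠ 0 := (Real.sqrt_pos.2 hz).ne'
  have hH : (fun w => dot w.2 (omC a d w) / 2) = Chaplygin.chHamiltonian a d := rfl
  rw [hH, Chaplygin.chBracket_fst, Chaplygin.chBracket_snd, Chaplygin.gradM_chHamiltonian hz,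
    Chaplygin.gradX_chHamiltonian hz, Chaplygin.cross_smul_right, Chaplygin.dot_diag_comm a z.2 z.1]
  constructor
  · field_simp
  · simp only [Pi.smul_apply, smul_eq_mul]
    field_simp
    ring
end
end

section
/- Along the Veselova vector field Z(x,M) = (x × ω, M × ω + λx), with ω = ÂM and λ = (ÂM × M, Âx)/(Âx,x), the following hold at every point of V: the functions Ĥ_3 = (x,x) and Ĥ_4 = (x, ÂM) have vanishing derivative along Z; on the subset where (x,x) ≠ 0, the function Ĥ_2 = (M,M) − (x,M)²/(x,x) has vanishing derivative along Z; and at every point where additionally (x, ÂM) = 0, the function Ĥ_1 = (M, ÂM) has vanishing derivative along Z. -/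
open scoped BigOperators

noncomputable section

/-- angular velocity `ω = Â M` with `Â = diag â` -/
def omV (ah : Fin 3 → ℝ) (z : Pt3) : Fin 3 → ℝ := fun i => ah i * z.2 i

/-- Lagrange multiplier `λ = (Â M × M, Â x)/(Â x, x)` -/
def lamV (ah : Fin 3 → ℝ) (z : Pt3) : ℝ :=
  dot (cross (omV ah z) z.2) (fun i => ah i * z.1 i)
    / dot (fun i => ah i * z.1 i) z.1

/-- the Veselova vector field `Z(x,M) = (x × ω, M × ω + λ x)` -/
def Zves (ah : Fin 3 → ℝ) (z : Pt3) : Pt3 :=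
  (cross z.1 (omV ah z), fun i => cross z.2 (omV ah z) i + lamV ah z * z.1 i)

/-!
Each integral is built from scalar products of the linear functions `x`, `M`, `ÂM`, so its
derivative along `Z` is read off the derivative along the line `t ↦ z + tZ`, and is a combination
of scalar products with `x × ω` and `M × ω + λx`. These vanish or collapse by `(a × b, a) = 0`,
`(a × b, b) = 0`, the cyclic symmetry of the triple product and the symmetry of `Â`; the one term
that survives in the derivative of `(x, ÂM)`, namely `(Âx, M × ω)`, is cancelled by `λ(Âx, x)`,
which is how `λ` is chosen.
-/

open Matrix

theorem dot_eq_dotProduct (a b : Fin 3 → ℝ) : dot a b = a ⬝ᵥ b := rfl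

theorem cross_eq_crossProduct_s12 (a b : Fin 3 → ℝ) : cross a b = a ⨯₃ b := by
  ext i
  fin_cases i <;> simp [cross, eps, cross_apply, Fin.sum_univ_three] <;> ring

theorem dotProduct_mul_left_comm {n R : Type*} [Fintype n] [CommSemiring R] (a b c : n → R) :
    a ⬝ᵥ (c * b) = (c * a) ⬝ᵥ b := by
  simp only [dotProduct, Pi.mul_apply, mul_assoc, mul_left_comm]

theorem HasDerivAt.dot {f g : ℝ → Fin 3 → ℝ} {f' g' : Fin 3 → ℝ} {t : ℝ}
    (hf : HasDerivAt f f' t) (hg : HasDerivAt g g' t) :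
    HasDerivAt (fun s => dot (f s) (g s)) (dot f' (g t) + dot (f t) g') t := by
  have := HasDerivAt.fun_sum (u := Finset.univ) fun i _ =>
    (hasDerivAt_pi.1 hf i).fun_mul (hasDerivAt_pi.1 hg i)
  simpa only [_root_.dot, Finset.sum_add_distrib, add_comm] using this

section LineDerivative

variable {E : Type*} [NormedAddCommGroup E] [NormedSpace ℝ E]

theorem fderiv_apply_eq_of_hasDerivAt_line {φ : E → ℝ} {z v : E} {c : ℝ}
    (hφ : DifferentiableAt ℝ φ z) (hline : HasDerivAt (fun t : ℝ => φ (z + t • v)) c 0) :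
    fderiv ℝ φ z v = c := by
  rw [← hφ.lineDeriv_eq_fderiv, lineDeriv, hline.deriv]

theorem IsLinearMap.hasDerivAt_line {F : Type*} [NormedAddCommGroup F] [NormedSpace ℝ F]
    {φ : E → F} (hφ : IsLinearMap ℝ φ) (z v : E) :
    HasDerivAt (fun t : ℝ => φ (z + t • v)) (φ v) 0 := by
  have := ((hasDerivAt_id (0 : ℝ)).smul_const (φ v)).const_add (φ z)
  simpa [hφ.map_add, hφ.map_smul] using this

theorem IsLinearMap.differentiable [FiniteDimensional ℝ E] {F : Type*} [NormedAddCommGroup F]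
    [NormedSpace ℝ F] {φ : E → F} (hφ : IsLinearMap ℝ φ) : Differentiable ℝ φ :=
  (IsLinearMap.mk' φ hφ).toContinuousLinearMap.differentiable

variable {f g : E → Fin 3 → ℝ}

theorem hasDerivAt_dot_line (hf : IsLinearMap ℝ f) (hg : IsLinearMap ℝ g) (z v : E) :
    HasDerivAt (fun t : ℝ => dot (f (z + t • v)) (g (z + t • v)))
      (dot (f v) (g z) + dot (f z) (g v)) 0 := by
  simpa using (hf.hasDerivAt_line z v).dot (hg.hasDerivAt_line z v)

theorem differentiable_dot [FiniteDimensional ℝ E] (hf : IsLinearMap ℝ f)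
    (hg : IsLinearMap ℝ g) : Differentiable ℝ fun w => dot (f w) (g w) := by
  have hf' := hf.differentiable
  have hg' := hg.differentiable
  simp only [dot]
  fun_prop

theorem fderiv_dot_apply [FiniteDimensional ℝ E] (hf : IsLinearMap ℝ f) (hg : IsLinearMap ℝ g)
    (z v : E) : fderiv ℝ (fun w => dot (f w) (g w)) z v = dot (f v) (g z) + dot (f z) (g v) :=
  fderiv_apply_eq_of_hasDerivAt_line (differentiable_dot hf hg z) (hasDerivAt_dot_line hf hg z v)

end LineDerivative

section Veselova

variable (ah : Fin 3 → ℝ) (z : Pt3)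

theorem omV_eq : omV ah z = ah * z.2 := rfl

theorem Zves_fst : (Zves ah z).1 = z.1 ⨯₃ omV ah z := cross_eq_crossProduct_s12 _ _

theorem Zves_snd : (Zves ah z).2 = z.2 ⨯₃ omV ah z + lamV ah z • z.1 := by
  ext i
  simp [Zves, cross_eq_crossProduct_s12]

theorem lamV_mul (hV : (ah * z.1) ⬝ᵥ z.1 ≠ 0) :
    lamV ah z * (ah * z.1) ⬝ᵥ z.1 = (omV ah z ⨯₃ z.2) ⬝ᵥ (ah * z.1) := by
  rw [lamV, ← cross_eq_crossProduct_s12]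
  exact div_mul_cancel₀ _ hV

theorem Zves_fst_dotProduct_fst : (Zves ah z).1 ⬝ᵥ z.1 = 0 := by
  rw [Zves_fst, dotProduct_comm, dot_self_cross]

theorem Zves_snd_dotProduct_snd : (Zves ah z).2 ⬝ᵥ z.2 = lamV ah z * z.1 ⬝ᵥ z.2 := by
  rw [Zves_snd, dotProduct_comm, dotProduct_add, dot_self_cross, dotProduct_smul, smul_eq_mul,
    dotProduct_comm, zero_add]

theorem Zves_dotProduct_fst_snd :
    (Zves ah z).1 ⬝ᵥ z.2 + z.1 ⬝ᵥ (Zves ah z).2 = lamV ah z * z.1 ⬝ᵥ z.1 := by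
  rw [Zves_fst, Zves_snd, dotProduct_add, dotProduct_smul, smul_eq_mul, dotProduct_comm,
    triple_product_permutation, ← cross_anticomm, dotProduct_neg, dotProduct_comm z.1]
  ring

theorem Zves_snd_dotProduct_omV : (Zves ah z).2 ⬝ᵥ omV ah z = lamV ah z * z.1 ⬝ᵥ omV ah z := by
  rw [Zves_snd, add_dotProduct, dotProduct_comm, dot_cross_self, smul_dotProduct, smul_eq_mul,
    zero_add]

theorem Zves_dotProduct_fst_omV (hV : (ah * z.1) ⬝ᵥ z.1 ≠ 0) :
    (Zves ah z).1 ⬝ᵥ omV ah z + z.1 ⬝ᵥ (ah * (Zves ah z).2) = 0 := by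
  rw [dotProduct_mul_left_comm, Zves_fst, Zves_snd, dotProduct_comm, dot_cross_self,
    dotProduct_add, dotProduct_smul, smul_eq_mul, lamV_mul ah z hV, ← cross_anticomm,
    dotProduct_neg, dotProduct_comm]
  ring

theorem isLinearMap_fst : IsLinearMap ℝ fun w : Pt3 => w.1 := (LinearMap.fst ℝ _ _).isLinear

theorem isLinearMap_snd : IsLinearMap ℝ fun w : Pt3 => w.2 := (LinearMap.snd ℝ _ _).isLinear

theorem isLinearMap_const_mul_snd : IsLinearMap ℝ fun w : Pt3 => fun i => ah i * w.2 i :=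
  ((LinearMap.mulLeft ℝ ah).comp (LinearMap.snd ℝ _ _)).isLinear

theorem fderiv_H3_Zves : fderiv ℝ (fun w => dot w.1 w.1) z (Zves ah z) = 0 := by
  rw [fderiv_dot_apply isLinearMap_fst isLinearMap_fst, dot_eq_dotProduct, dot_eq_dotProduct,
    dotProduct_comm z.1, Zves_fst_dotProduct_fst, add_zero]

theorem fderiv_H4_Zves (hV : dot (fun i => ah i * z.1 i) z.1 ≠ 0) :
    fderiv ℝ (fun w => dot w.1 (fun i => ah i * w.2 i)) z (Zves ah z) = 0 := by
  rw [fderiv_dot_apply isLinearMap_fst (isLinearMap_const_mul_snd ah)]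
  exact Zves_dotProduct_fst_omV ah z hV

theorem fderiv_H2_Zves (hx : dot z.1 z.1 ≠ 0) :
    fderiv ℝ (fun w => dot w.2 w.2 - (dot w.1 w.2) ^ 2 / dot w.1 w.1) z (Zves ah z) = 0 := by
  have hxx := hasDerivAt_dot_line isLinearMap_fst isLinearMap_fst z (Zves ah z)
  have hxM := hasDerivAt_dot_line isLinearMap_fst isLinearMap_snd z (Zves ah z)
  have hMM := hasDerivAt_dot_line isLinearMap_snd isLinearMap_snd z (Zves ah z)
  have hdiff :
      DifferentiableAt ℝ (fun w : Pt3 => dot w.2 w.2 - dot w.1 w.2 ^ 2 / dot w.1 w.1) z := by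
    have := differentiable_dot isLinearMap_fst isLinearMap_fst
    have := differentiable_dot isLinearMap_fst isLinearMap_snd
    have := differentiable_dot isLinearMap_snd isLinearMap_snd
    fun_prop (disch := exact hx)
  rw [fderiv_apply_eq_of_hasDerivAt_line hdiff
    (hMM.sub ((hxM.fun_pow 2).div hxx (by simpa using hx)))]
  simp only [zero_smul, add_zero, dot_eq_dotProduct] at hx ⊢
  rw [dotProduct_comm z.2, Zves_snd_dotProduct_snd, Zves_dotProduct_fst_snd,
    dotProduct_comm z.1 (Zves ah z).1, Zves_fst_dotProduct_fst]
  field_simp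
  ring

theorem fderiv_H1_Zves (h0 : dot z.1 (fun i => ah i * z.2 i) = 0) :
    fderiv ℝ (fun w => dot w.2 (fun i => ah i * w.2 i)) z (Zves ah z) = 0 := by
  rw [fderiv_dot_apply isLinearMap_snd (isLinearMap_const_mul_snd ah)]
  change (Zves ah z).2 ⬝ᵥ omV ah z + z.2 ⬝ᵥ (ah * (Zves ah z).2) = 0
  rw [dotProduct_mul_left_comm, ← omV_eq, dotProduct_comm (omV ah z), Zves_snd_dotProduct_omV]
  change z.1 ⬝ᵥ omV ah z = 0 at h0
  rw [h0, mul_zero, add_zero]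

end Veselova

/-- first integrals of the Veselova vector field. -/
theorem veselova_integrals (ah : Fin 3 → ℝ) :
    ∀ z : Pt3, dot (fun i => ah i * z.1 i) z.1 ≠ 0 →
      fderiv ℝ (fun w => dot w.1 w.1) z (Zves ah z) = 0
      ∧ fderiv ℝ (fun w => dot w.1 (fun i => ah i * w.2 i)) z (Zves ah z) = 0
      ∧ (dot z.1 z.1 ≠ 0 →
          fderiv ℝ (fun w => dot w.2 w.2 - (dot w.1 w.2) ^ 2 / dot w.1 w.1) z
            (Zves ah z) = 0)
      ∧ (dot z.1 (fun i => ah i * z.2 i) = 0 →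
          fderiv ℝ (fun w => dot w.2 (fun i => ah i * w.2 i)) z (Zves ah z) = 0) :=
  fun z hV => ⟨fderiv_H3_Zves ah z, fderiv_H4_Zves ah z hV, fderiv_H2_Zves ah z,
    fderiv_H1_Zves ah z⟩
end
end

section
/- With respect to the Veselova bracket {·,·}_v on W: the functions (x,x) and (x,K) are Casimirs, i.e. {(x,x), f}_v = 0 and {(x,K), f}_v = 0 for every smooth function f on W; and the integrals Ĥ_1 = (K, Â_gK) and Ĥ_2 = (K,K) are in involution, {Ĥ_1, Ĥ_2}_v = 0 on W, where Â_g = Â − ĝ^{−2}(E−Â)(x⊗x)(E−Â). -/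
open scoped BigOperators

noncomputable section

/-- `ĝ(x) = (x, Â x)^{1/2}` -/
def ghat (ah : Fin 3 → ℝ) (x : Fin 3 → ℝ) : ℝ :=
  Real.sqrt (dot x (fun i => ah i * x i))

/-- the open set `W = {(x,K) : (x, Â x) > 0}` -/
def Wset (ah : Fin 3 → ℝ) : Set Pt3 :=
  {z | dot z.1 (fun i => ah i * z.1 i) > 0}

/-- `π_{K_i x_j} = ε_{ijk} ĝ x_k` (summation over `k`) -/
def AxmV (ah : Fin 3 → ℝ) (i j : Fin 3) (z : Pt3) : ℝ :=
  ∑ k, eps i j k * ghat ah z.1 * z.1 k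

/-- `π_{K_i K_j} = ε_{ijk} ( ĝ K_k + x_k ( ∑_m K_m ∂ĝ/∂x_m - (x,K)/ĝ ) )`
(summation over `k`) -/
def BmmV (ah : Fin 3 → ℝ) (i j : Fin 3) (z : Pt3) : ℝ :=
  ∑ k, eps i j k * (ghat ah z.1 * z.2 k
    + z.1 k * ((∑ m, z.2 m * dxg (ghat ah) m z.1) - dot z.1 z.2 / ghat ah z.1))

/-- the Veselova bracket {·,·}_v -/
def vesBracket (ah : Fin 3 → ℝ) (f h : Pt3 → ℝ) (z : Pt3) : ℝ :=
  piBracket (AxmV ah) (BmmV ah) f h z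

/-- `Â_g K = Â K - ĝ⁻² (E - Â)(x ⊗ x)(E - Â) K` -/
def AghatK (ah : Fin 3 → ℝ) (x K : Fin 3 → ℝ) : Fin 3 → ℝ := fun i =>
  ah i * K i
    - (ghat ah x) ⁻¹ ^ 2 * ((1 - ah i) * x i) * (∑ j, (1 - ah j) * x j * K j)

-- aux
def Lx (i : Fin 3) : Pt3 →L[ℝ] ℝ :=
  (ContinuousLinearMap.proj i).comp (ContinuousLinearMap.fst ℝ (Fin 3 → ℝ) (Fin 3 → ℝ))
def LM (i : Fin 3) : Pt3 →L[ℝ] ℝ :=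
  (ContinuousLinearMap.proj i).comp (ContinuousLinearMap.snd ℝ (Fin 3 → ℝ) (Fin 3 → ℝ))
lemma hx (i : Fin 3) (z : Pt3) : HasFDerivAt (fun w : Pt3 => w.1 i) (Lx i) z := (Lx i).hasFDerivAt
lemma hM (i : Fin 3) (z : Pt3) : HasFDerivAt (fun w : Pt3 => w.2 i) (LM i) z := (LM i).hasFDerivAt
@[simp] lemma Lx_dx (i j : Fin 3) : Lx i (Pi.single j 1, 0) = if i = j then 1 else 0 := by
  simp [Lx, Pi.single_apply, eq_comm]
@[simp] lemma Lx_dM (i j : Fin 3) : Lx i ((0 : Fin 3 → ℝ), Pi.single j 1) = 0 := by simp [Lx]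
@[simp] lemma LM_dx (i j : Fin 3) : LM i (Pi.single j 1, (0 : Fin 3 → ℝ)) = 0 := by simp [LM]
@[simp] lemma LM_dM (i j : Fin 3) : LM i ((0:Fin 3 → ℝ), Pi.single j 1) = if i = j then 1 else 0 := by
  simp [LM, Pi.single_apply, eq_comm]

lemma dx_dot11 (j : Fin 3) (z : Pt3) : dx (fun w => dot w.1 w.1) j z = 2 * z.1 j := by
  have h := HasFDerivAt.fun_sum (fun i (_ : i ∈ Finset.univ) => (hx i z).fun_mul (hx i z))
  rw [dx, (show (fun w : Pt3 => dot w.1 w.1) = fun w => ∑ i, w.1 i * w.1 i by simp [dot]), h.fderiv]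
  simp only [ContinuousLinearMap.sum_apply, ContinuousLinearMap.add_apply,
    ContinuousLinearMap.smul_apply, Lx_dx, smul_eq_mul]
  fin_cases j <;> simp [Fin.sum_univ_three] <;> ring

lemma dM_dot11 (i : Fin 3) (z : Pt3) : dM (fun w => dot w.1 w.1) i z = 0 := by
  have h := HasFDerivAt.fun_sum (fun i (_ : i ∈ Finset.univ) => (hx i z).fun_mul (hx i z))
  rw [dM, (show (fun w : Pt3 => dot w.1 w.1) = fun w => ∑ i, w.1 i * w.1 i by simp [dot]), h.fderiv]
  simp [Fin.sum_univ_three]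

lemma dx_dot12 (j : Fin 3) (z : Pt3) : dx (fun w => dot w.1 w.2) j z = z.2 j := by
  have h := HasFDerivAt.fun_sum (fun i (_ : i ∈ Finset.univ) => (hx i z).fun_mul (hM i z))
  rw [dx, (show (fun w : Pt3 => dot w.1 w.2) = fun w => ∑ i, w.1 i * w.2 i by simp [dot]), h.fderiv]
  simp only [ContinuousLinearMap.sum_apply, ContinuousLinearMap.add_apply,
    ContinuousLinearMap.smul_apply, Lx_dx, LM_dx, smul_eq_mul]
  fin_cases j <;> simp [Fin.sum_univ_three]

lemma dM_dot12 (i : Fin 3) (z : Pt3) : dM (fun w => dot w.1 w.2) i z = z.1 i := by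
  have h := HasFDerivAt.fun_sum (fun i (_ : i ∈ Finset.univ) => (hx i z).fun_mul (hM i z))
  rw [dM, (show (fun w : Pt3 => dot w.1 w.2) = fun w => ∑ i, w.1 i * w.2 i by simp [dot]), h.fderiv]
  simp only [ContinuousLinearMap.sum_apply, ContinuousLinearMap.add_apply,
    ContinuousLinearMap.smul_apply, Lx_dM, LM_dM, smul_eq_mul]
  fin_cases i <;> simp [Fin.sum_univ_three]

lemma dx_dot22 (j : Fin 3) (z : Pt3) : dx (fun w => dot w.2 w.2) j z = 0 := by
  have h := HasFDerivAt.fun_sum (fun i (_ : i ∈ Finset.univ) => (hM i z).fun_mul (hM i z))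
  rw [dx, (show (fun w : Pt3 => dot w.2 w.2) = fun w => ∑ i, w.2 i * w.2 i by simp [dot]), h.fderiv]
  simp [Fin.sum_univ_three]

lemma dM_dot22 (i : Fin 3) (z : Pt3) : dM (fun w => dot w.2 w.2) i z = 2 * z.2 i := by
  have h := HasFDerivAt.fun_sum (fun i (_ : i ∈ Finset.univ) => (hM i z).fun_mul (hM i z))
  rw [dM, (show (fun w : Pt3 => dot w.2 w.2) = fun w => ∑ i, w.2 i * w.2 i by simp [dot]), h.fderiv]
  simp only [ContinuousLinearMap.sum_apply, ContinuousLinearMap.add_apply,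
    ContinuousLinearMap.smul_apply, LM_dM, smul_eq_mul]
  fin_cases i <;> simp [Fin.sum_univ_three] <;> ring

def Lp (i : Fin 3) : (Fin 3 → ℝ) →L[ℝ] ℝ := ContinuousLinearMap.proj i
lemma hp (i : Fin 3) (x : Fin 3 → ℝ) : HasFDerivAt (fun y : Fin 3 → ℝ => y i) (Lp i) x :=
  hasFDerivAt_apply (𝕜 := ℝ) i x

lemma dxg_ghat (ah : Fin 3 → ℝ) (m : Fin 3) (x : Fin 3 → ℝ)
    (hQ : 0 < dot x (fun i => ah i * x i)) :
    dxg (ghat ah) m x = ah m * x m / ghat ah x := by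
  have hq' : HasFDerivAt (fun y : Fin 3 → ℝ => dot y (fun i => ah i * y i))
      (∑ i, ((x i) • (ah i • Lp i) + (ah i * x i) • Lp i)) x := by
    have hq := HasFDerivAt.fun_sum (u := (Finset.univ : Finset (Fin 3)))
      (A := fun i (y : Fin 3 → ℝ) => y i * (ah i * y i))
      (fun i (_ : i ∈ Finset.univ) => (hp i x).mul ((hp i x).const_mul (ah i)))
    simpa [dot] using hq
  have hg := (Real.hasDerivAt_sqrt hQ.ne').comp_hasFDerivAt x hq'
  have hgf : HasFDerivAt (ghat ah)
      ((1 / (2 * Real.sqrt (dot x fun i => ah i * x i))) •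
        ∑ i, ((x i) • (ah i • Lp i) + (ah i * x i) • Lp i)) x := hg
  rw [dxg, hgf.fderiv]
  simp only [ContinuousLinearMap.smul_apply, ContinuousLinearMap.sum_apply,
    ContinuousLinearMap.add_apply, Lp, ContinuousLinearMap.proj_apply, smul_eq_mul, ghat]
  fin_cases m <;> simp [Fin.sum_univ_three, Pi.single_apply] <;> ring

def Ffun (ah : Fin 3 → ℝ) : Pt3 → ℝ := fun w =>
  (∑ i, w.2 i * (ah i * w.2 i)) -
    (∑ i, (1 - ah i) * w.1 i * w.2 i) * (∑ i, (1 - ah i) * w.1 i * w.2 i) *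
      (dot w.1 (fun i => ah i * w.1 i))⁻¹

lemma contQ (ah : Fin 3 → ℝ) : Continuous (fun w : Pt3 => dot w.1 (fun i => ah i * w.1 i)) := by
  simp only [dot]
  exact continuous_finset_sum _ fun i _ =>
    ((continuous_apply i).comp continuous_fst).mul
      (continuous_const.mul ((continuous_apply i).comp continuous_fst))

lemma H1_eq_F (ah : Fin 3 → ℝ) (w : Pt3) (hw : 0 < dot w.1 (fun i => ah i * w.1 i)) :
    dot w.2 (AghatK ah w.1 w.2) = Ffun ah w := by
  have hg2 : (ghat ah w.1)⁻¹ ^ 2 = (dot w.1 (fun i => ah i * w.1 i))⁻¹ := by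
    rw [inv_pow, ghat, Real.sq_sqrt hw.le]
  simp only [dot, AghatK, Ffun, hg2, Fin.sum_univ_three]
  ring

lemma fderiv_H1 (ah : Fin 3 → ℝ) (z : Pt3) (hz : 0 < dot z.1 (fun i => ah i * z.1 i)) :
    fderiv ℝ (fun w : Pt3 => dot w.2 (AghatK ah w.1 w.2)) z = fderiv ℝ (Ffun ah) z := by
  have hopen : IsOpen {w : Pt3 | 0 < dot w.1 (fun i => ah i * w.1 i)} :=
    isOpen_lt continuous_const (contQ ah)
  have hmem : {w : Pt3 | 0 < dot w.1 (fun i => ah i * w.1 i)} ∈ nhds z := hopen.mem_nhds hz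
  exact Filter.EventuallyEq.fderiv_eq
    (Filter.eventuallyEq_of_mem hmem fun w hw => H1_eq_F ah w hw)


lemma dx_H1 (ah : Fin 3 → ℝ) (z : Pt3) (hz : 0 < dot z.1 (fun i => ah i * z.1 i)) (j : Fin 3) :
    dx (fun w : Pt3 => dot w.2 (AghatK ah w.1 w.2)) j z =
      -(2 * (∑ m, (1 - ah m) * z.1 m * z.2 m) * ((1 - ah j) * z.2 j))
          * (ghat ah z.1 * ghat ah z.1)⁻¹
        + ((∑ m, (1 - ah m) * z.1 m * z.2 m) * (∑ m, (1 - ah m) * z.1 m * z.2 m))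
          * ((ghat ah z.1 * ghat ah z.1)⁻¹ * (ghat ah z.1 * ghat ah z.1)⁻¹)
          * (2 * (ah j * z.1 j)) := by
  have hgg : ghat ah z.1 * ghat ah z.1 = dot z.1 (fun i => ah i * z.1 i) :=
    Real.mul_self_sqrt hz.le
  have hE := HasFDerivAt.fun_sum (fun i (_ : i ∈ Finset.univ) =>
    (hM i z).mul ((hM i z).const_mul (ah i)))
  have hS := HasFDerivAt.fun_sum (fun i (_ : i ∈ Finset.univ) =>
    ((hx i z).const_mul (1 - ah i)).mul (hM i z))
  have hQ := HasFDerivAt.fun_sum (fun i (_ : i ∈ Finset.univ) =>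
    (hx i z).mul ((hx i z).const_mul (ah i)))
  have hQ' : HasFDerivAt (fun w : Pt3 => dot w.1 (fun i => ah i * w.1 i))
      (∑ i, (z.1 i • (ah i • Lx i) + (ah i * z.1 i) • Lx i)) z := by
    simpa [dot] using hQ
  have hInv := (hasDerivAt_inv hz.ne').comp_hasFDerivAt z hQ'
  have hF : HasFDerivAt (Ffun ah) _ z := hE.sub ((hS.mul hS).mul hInv)
  rw [dx, fderiv_H1 ah z hz, hF.fderiv, ← hgg]
  simp only [ContinuousLinearMap.coe_sub', Pi.sub_apply, ContinuousLinearMap.sum_apply,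
    ContinuousLinearMap.add_apply, ContinuousLinearMap.smul_apply, Lx_dx, Lx_dM, LM_dx, LM_dM,
    smul_eq_mul, Function.comp, ContinuousLinearMap.coe_smul', Pi.smul_apply,
    ContinuousLinearMap.coe_comp']
  fin_cases j <;> simp [Fin.sum_univ_three] <;> ring

lemma dM_H1 (ah : Fin 3 → ℝ) (z : Pt3) (hz : 0 < dot z.1 (fun i => ah i * z.1 i)) (i : Fin 3) :
    dM (fun w : Pt3 => dot w.2 (AghatK ah w.1 w.2)) i z =
      2 * (ah i * z.2 i)
        - 2 * (∑ m, (1 - ah m) * z.1 m * z.2 m) * ((1 - ah i) * z.1 i)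
          * (ghat ah z.1 * ghat ah z.1)⁻¹ := by
  have hgg : ghat ah z.1 * ghat ah z.1 = dot z.1 (fun i => ah i * z.1 i) :=
    Real.mul_self_sqrt hz.le
  have hE := HasFDerivAt.fun_sum (fun i (_ : i ∈ Finset.univ) =>
    (hM i z).mul ((hM i z).const_mul (ah i)))
  have hS := HasFDerivAt.fun_sum (fun i (_ : i ∈ Finset.univ) =>
    ((hx i z).const_mul (1 - ah i)).mul (hM i z))
  have hQ := HasFDerivAt.fun_sum (fun i (_ : i ∈ Finset.univ) =>
    (hx i z).mul ((hx i z).const_mul (ah i)))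
  have hQ' : HasFDerivAt (fun w : Pt3 => dot w.1 (fun i => ah i * w.1 i))
      (∑ i, (z.1 i • (ah i • Lx i) + (ah i * z.1 i) • Lx i)) z := by
    simpa [dot] using hQ
  have hInv := (hasDerivAt_inv hz.ne').comp_hasFDerivAt z hQ'
  have hF : HasFDerivAt (Ffun ah) _ z := hE.sub ((hS.mul hS).mul hInv)
  rw [dM, fderiv_H1 ah z hz, hF.fderiv, ← hgg]
  simp only [ContinuousLinearMap.coe_sub', Pi.sub_apply, ContinuousLinearMap.sum_apply,
    ContinuousLinearMap.add_apply, ContinuousLinearMap.smul_apply, Lx_dx, Lx_dM, LM_dx, LM_dM,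
    smul_eq_mul, Function.comp, ContinuousLinearMap.coe_smul', Pi.smul_apply,
    ContinuousLinearMap.coe_comp']
  fin_cases i <;> simp [Fin.sum_univ_three] <;> ring


lemma eps_000 : eps 0 0 0 = (0 : ℝ) := by norm_num [eps]
lemma eps_001 : eps 0 0 1 = (0 : ℝ) := by norm_num [eps]
lemma eps_002 : eps 0 0 2 = (0 : ℝ) := by norm_num [eps]
lemma eps_010 : eps 0 1 0 = (0 : ℝ) := by norm_num [eps]
lemma eps_011 : eps 0 1 1 = (0 : ℝ) := by norm_num [eps]
lemma eps_012 : eps 0 1 2 = (1 : ℝ) := by norm_num [eps]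
lemma eps_020 : eps 0 2 0 = (0 : ℝ) := by norm_num [eps]
lemma eps_021 : eps 0 2 1 = (-1 : ℝ) := by norm_num [eps]
lemma eps_022 : eps 0 2 2 = (0 : ℝ) := by norm_num [eps]
lemma eps_100 : eps 1 0 0 = (0 : ℝ) := by norm_num [eps]
lemma eps_101 : eps 1 0 1 = (0 : ℝ) := by norm_num [eps]
lemma eps_102 : eps 1 0 2 = (-1 : ℝ) := by norm_num [eps]
lemma eps_110 : eps 1 1 0 = (0 : ℝ) := by norm_num [eps]
lemma eps_111 : eps 1 1 1 = (0 : ℝ) := by norm_num [eps]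
lemma eps_112 : eps 1 1 2 = (0 : ℝ) := by norm_num [eps]
lemma eps_120 : eps 1 2 0 = (1 : ℝ) := by norm_num [eps]
lemma eps_121 : eps 1 2 1 = (0 : ℝ) := by norm_num [eps]
lemma eps_122 : eps 1 2 2 = (0 : ℝ) := by norm_num [eps]
lemma eps_200 : eps 2 0 0 = (0 : ℝ) := by norm_num [eps]
lemma eps_201 : eps 2 0 1 = (1 : ℝ) := by norm_num [eps]
lemma eps_202 : eps 2 0 2 = (0 : ℝ) := by norm_num [eps]
lemma eps_210 : eps 2 1 0 = (-1 : ℝ) := by norm_num [eps]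
lemma eps_211 : eps 2 1 1 = (0 : ℝ) := by norm_num [eps]
lemma eps_212 : eps 2 1 2 = (0 : ℝ) := by norm_num [eps]
lemma eps_220 : eps 2 2 0 = (0 : ℝ) := by norm_num [eps]
lemma eps_221 : eps 2 2 1 = (0 : ℝ) := by norm_num [eps]
lemma eps_222 : eps 2 2 2 = (0 : ℝ) := by norm_num [eps]

set_option maxHeartbeats 2000000 in
/-- `(x,x)` and `(x,K)` are Casimirs of the Veselova bracket, and the
integrals `Ĥ₁ = (K, Â_g K)` and `Ĥ₂ = (K,K)` are in involution on `W`. -/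
theorem veselova_casimirs_involution (ah : Fin 3 → ℝ) :
    (∀ f : Pt3 → ℝ, ContDiffOn ℝ (⊤ : ℕ∞) f (Wset ah) → ∀ z ∈ Wset ah,
      vesBracket ah (fun w => dot w.1 w.1) f z = 0
      ∧ vesBracket ah (fun w => dot w.1 w.2) f z = 0)
    ∧ (∀ z ∈ Wset ah,
      vesBracket ah (fun w => dot w.2 (AghatK ah w.1 w.2))
        (fun w => dot w.2 w.2) z = 0) := by
  constructor
  · intro f _ z hz
    constructor
    · simp only [vesBracket, piBracket, dx_dot11, dM_dot11, AxmV, Fin.sum_univ_three]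
      simp only [eps_000, eps_001, eps_002, eps_010, eps_011, eps_012, eps_020, eps_021, eps_022, eps_100, eps_101, eps_102, eps_110, eps_111, eps_112, eps_120, eps_121, eps_122, eps_200, eps_201, eps_202, eps_210, eps_211, eps_212, eps_220, eps_221, eps_222, zero_mul, mul_zero, one_mul, mul_one, neg_mul, mul_neg,
        add_zero, zero_add, neg_zero, neg_neg]
      ring
    · simp only [vesBracket, piBracket, dx_dot12, dM_dot12, AxmV, BmmV, Fin.sum_univ_three]
      simp only [eps_000, eps_001, eps_002, eps_010, eps_011, eps_012, eps_020, eps_021, eps_022, eps_100, eps_101, eps_102, eps_110, eps_111, eps_112, eps_120, eps_121, eps_122, eps_200, eps_201, eps_202, eps_210, eps_211, eps_212, eps_220, eps_221, eps_222, zero_mul, mul_zero, one_mul, mul_one, neg_mul, mul_neg,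
        add_zero, zero_add, neg_zero, neg_neg]
      ring
  · intro z hz
    have hz' : 0 < dot z.1 (fun i => ah i * z.1 i) := hz
    have hg : 0 < ghat ah z.1 := Real.sqrt_pos.mpr hz'
    have hdxg : ∀ m, dxg (ghat ah) m z.1 = ah m * z.1 m / ghat ah z.1 :=
      fun m => dxg_ghat ah m z.1 hz'
    simp only [vesBracket, piBracket, dx_dot22, dM_dot22, dx_H1 ah z hz', dM_H1 ah z hz']
    simp only [AxmV, BmmV, hdxg, dot, Fin.sum_univ_three,
      eps_000, eps_001, eps_002, eps_010, eps_011, eps_012, eps_020, eps_021, eps_022, eps_100, eps_101, eps_102, eps_110, eps_111, eps_112, eps_120, eps_121, eps_122, eps_200, eps_201, eps_202, eps_210, eps_211, eps_212, eps_220, eps_221, eps_222, zero_mul, mul_zero, one_mul, mul_one, neg_mul, mul_neg,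
      add_zero, zero_add, neg_zero, neg_neg]
    field_simp
    ring
end
end
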